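/- arXiv:1204.4447 — 14 statements merged into one kernel-verified Lean document; each statement's English description precedes it below -/
import Mathlib

section
/- Let n be a natural number with n > 1. Then the integer sum ∑_{d ∣ n} μ(n/d)·(2^d − d − 1), taken over the positive divisors d of n, is strictly positive. (Equivalently, for any k the product ∏_{d∣n} (k^{2^d−d−1})^{μ(n/d)} is a positive power of k.) -/
/-!
The term `d = n` contributes `2^n - n - 1`, and since `|μ| ≤ 1` the proper divisors can cancel
at most `∑_{d < n} (2^d - d - 1) = 2^n - n - 1 - n(n-1)/2`, which falls short for `n > 1`.
-/

open ArithmeticFunction ArithmeticFunction.Moebius Finset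

lemma sub_sum_properDivisors_abs_le_sum_divisors_moebius_mul {n : ℕ} (hn : n ≠ 0) (g : ℕ → ℤ) :
    g n - ∑ d ∈ n.properDivisors, |g d| ≤ ∑ d ∈ n.divisors, (μ (n / d) : ℤ) * g d := by
  rw [← Nat.cons_self_properDivisors hn, sum_cons, Nat.div_self (Nat.pos_of_ne_zero hn),
    moebius_apply_one, one_mul, sub_eq_add_neg, ← sum_neg_distrib]
  gcongr with d
  calc -|g d| ≤ -|(μ (n / d) : ℤ) * g d| := by
        rw [abs_mul]
        exact neg_le_neg (mul_le_of_le_one_left (abs_nonneg _) abs_moebius_le_one)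
    _ ≤ (μ (n / d) : ℤ) * g d := neg_abs_le _

lemma two_pow_sub_self_sub_one_nonneg (d : ℕ) : 0 ≤ (2 : ℤ) ^ d - d - 1 := by
  have : (d : ℤ) < 2 ^ d := mod_cast Nat.lt_two_pow_self
  omega

lemma sum_range_two_pow_sub_self_sub_one_add_le (k : ℕ) :
    ∑ d ∈ range (k + 1), ((2 : ℤ) ^ d - d - 1) + k ≤ 2 ^ (k + 1) - (k + 1 : ℕ) - 1 := by
  induction k with
  | zero => simp
  | succ k ih =>
    have := two_pow_sub_self_sub_one_nonneg (k + 1)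
    rw [sum_range_succ, pow_succ _ (k + 1)]
    push_cast at ih this ⊢
    linarith

theorem moebius_sum_two_pow_sub_d_sub_one_pos (n : ℕ) (hn : 1 < n) :
    0 < ∑ d ∈ n.divisors, (μ (n / d) : ℤ) * ((2 : ℤ) ^ d - d - 1) := by
  obtain ⟨k, rfl⟩ : ∃ k, n = k + 1 := ⟨n - 1, by omega⟩
  have h_proper : ∑ d ∈ (k + 1).properDivisors, |(2 : ℤ) ^ d - d - 1|
      ≤ ∑ d ∈ range (k + 1), ((2 : ℤ) ^ d - d - 1) := by
    simp only [abs_of_nonneg (two_pow_sub_self_sub_one_nonneg _)]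
    refine sum_le_sum_of_subset_of_nonneg (fun d hd => ?_)
      (fun d _ _ => two_pow_sub_self_sub_one_nonneg d)
    exact mem_range.mpr (Nat.mem_properDivisors.mp hd).2
  have h_range := sum_range_two_pow_sub_self_sub_one_add_le k
  have h_main := sub_sum_properDivisors_abs_le_sum_divisors_moebius_mul (n := k + 1)
    (by omega) (fun d => (2 : ℤ) ^ d - d - 1)
  have hk : (0 : ℤ) < k := mod_cast (by omega : 0 < k)
  linarith
end

section
/- Let n be a natural number with n > 1. Then the integer sum ∑_{d ∣ n} μ(n/d)·(2^d − 1), taken over the positive divisors d of n, is strictly positive. -/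
/-! Since `∑_{d ∣ n} μ(n/d) = 0` for `n > 1`, the sum equals `∑_{d ∣ n} μ(n/d) 2^d`. Its term
`2^n` outweighs all the others together, because `|μ| ≤ 1` and `∑_{d < n} 2^d < 2^n`. -/

open ArithmeticFunction ArithmeticFunction.Moebius Finset

theorem sum_divisors_moebius_div_eq_zero {n : ℕ} (hn : n ≠ 1) :
    ∑ d ∈ n.divisors, μ (n / d) = 0 := by
  rw [Nat.sum_div_divisors n μ, ← coe_mul_zeta_apply, moebius_mul_coe_zeta, one_apply_ne hn]

theorem sum_divisors_moebius_div_mul_pos {f : ℕ → ℤ} {n : ℕ} (hn : n ≠ 0)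
    (hf : ∑ d ∈ n.properDivisors, |f d| < f n) :
    0 < ∑ d ∈ n.divisors, μ (n / d) * f d := by
  rw [← Nat.cons_self_properDivisors hn, sum_cons, Nat.div_self (Nat.pos_of_ne_zero hn),
    moebius_apply_one, one_mul]
  have hrest : |∑ d ∈ n.properDivisors, μ (n / d) * f d| ≤ ∑ d ∈ n.properDivisors, |f d| :=
    (abs_sum_le_sum_abs _ _).trans <| sum_le_sum fun d _ ↦ by
      rw [abs_mul]
      exact mul_le_of_le_one_left (abs_nonneg _) abs_moebius_le_one
  linarith [neg_abs_le (∑ d ∈ n.properDivisors, μ (n / d) * f d)]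

open ArithmeticFunction ArithmeticFunction.Moebius in
theorem moebius_sum_two_pow_sub_one_pos (n : ℕ) (hn : 1 < n) :
    0 < ∑ d ∈ n.divisors, (μ (n / d) : ℤ) * ((2 : ℤ) ^ d - 1) := by
  simp only [mul_sub, mul_one, sum_sub_distrib, sum_divisors_moebius_div_eq_zero hn.ne', sub_zero]
  refine sum_divisors_moebius_div_mul_pos (by omega) ?_
  simp only [abs_pow, abs_two]
  exact_mod_cast Nat.geomSum_lt le_rfl fun d hd ↦ (Nat.mem_properDivisors.1 hd).2
end

section
/- Let n be a natural number with n > 1. Then the integer sum ∑_{d ∣ n} μ(n/d)·2^{d−1}, taken over the positive divisors d of n, is strictly positive. -/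
/-!
Only the term `d = n` carries the weight `2 ^ (n - 1)`. Every other divisor is a proper divisor
`d < n`, the exponents `d - 1` of these are pairwise distinct and smaller than `n - 1`, and
`|μ| ≤ 1`; so the remaining terms add up to less than `2 ^ (n - 1)` in absolute value, since
a sum of distinct powers of two below `2 ^ (n - 1)` stays below it.
-/

open ArithmeticFunction ArithmeticFunction.Moebius

lemma Nat.sum_pow_pred_lt {b n : ℕ} {s : Finset ℕ} (hb : 2 ≤ b)
    (hs : ∀ d ∈ s, 0 < d ∧ d < n) : ∑ d ∈ s, b ^ (d - 1) < b ^ (n - 1) := by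
  have hinj : Set.InjOn (· - 1) (s : Set ℕ) := fun d hd e he hde => by
    have := hs d hd; have := hs e he; simp only at hde; omega
  rw [← Finset.sum_image (g := (· - 1)) (f := (b ^ ·)) hinj]
  refine Nat.geomSum_lt hb fun k hk => ?_
  obtain ⟨d, hd, rfl⟩ := Finset.mem_image.mp hk
  have := hs d hd
  omega

lemma abs_sum_moebius_mul_pow_pred_lt {n : ℕ} {s : Finset ℕ} (f : ℕ → ℕ)
    (hs : ∀ d ∈ s, 0 < d ∧ d < n) :
    |∑ d ∈ s, (μ (f d) : ℤ) * 2 ^ (d - 1)| < 2 ^ (n - 1) := calc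
  _ ≤ ∑ d ∈ s, |(μ (f d) : ℤ) * 2 ^ (d - 1)| := Finset.abs_sum_le_sum_abs _ _
  _ ≤ ∑ d ∈ s, (2 : ℤ) ^ (d - 1) := Finset.sum_le_sum fun d _ => by
    rw [abs_mul, abs_pow, abs_two]
    exact mul_le_of_le_one_left (by positivity) abs_moebius_le_one
  _ < 2 ^ (n - 1) := mod_cast Nat.sum_pow_pred_lt le_rfl hs

open ArithmeticFunction ArithmeticFunction.Moebius in
theorem moebius_sum_two_pow_pred_pos (n : ℕ) (hn : 1 < n) :
    0 < ∑ d ∈ n.divisors, (μ (n / d) : ℤ) * (2 : ℤ) ^ (d - 1) := by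
  have hn0 : n ≠ 0 := by omega
  rw [← Nat.cons_self_properDivisors hn0, Finset.sum_cons, Nat.div_self (by omega),
    moebius_apply_one, one_mul]
  have hproper : ∀ d ∈ n.properDivisors, 0 < d ∧ d < n := fun d hd =>
    ⟨Nat.pos_of_mem_properDivisors hd, (Nat.mem_properDivisors.mp hd).2⟩
  have := abs_lt.mp (abs_sum_moebius_mul_pow_pred_lt (n / ·) hproper)
  linarith [this.1]
end

section
/- Let n be a natural number with n > 1, and for each positive integer d set b(d) = ⌈2(2^{d−1} − 1)/3⌉ (the ceiling; as a natural number b(d) = (2·(2^{d−1} − 1) + 2)/3 with integer division). Then the integer sum ∑_{d ∣ n} μ(n/d)·b(d), taken over the positive divisors d of n, is strictly positive. -/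
/-!
The summand `b(d) = ⌈2(2^(d-1) - 1)/3⌉` is just `⌊2^d/3⌋`. In the Möbius sum the term
`d = n` contributes `b(n)`, and every other term is at least `-b(d)` for a proper divisor
`d ≤ n/2`. Since the floors `⌊2^d/3⌋` grow geometrically, `∑_{d ≤ n/2} ⌊2^d/3⌋ < ⌊2^(n/2+1)/3⌋`,
which is at most `b(n)`.
-/

open Finset ArithmeticFunction ArithmeticFunction.Moebius

theorem Nat.le_div_two_of_mem_properDivisors {d n : ℕ} (h : d ∈ n.properDivisors) :
    d ≤ n / 2 := by
  obtain ⟨⟨k, rfl⟩, hlt⟩ := Nat.mem_properDivisors.1 h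
  have hk : 2 ≤ k := by
    rcases k with _ | _ | k
    · simp at hlt
    · simp at hlt
    · omega
  exact (Nat.le_div_iff_mul_le two_pos).2 (by nlinarith)

theorem Nat.properDivisors_subset_range_div_two_add_one (n : ℕ) :
    n.properDivisors ⊆ range (n / 2 + 1) := fun _ hd =>
  mem_range.2 (Nat.lt_succ_of_le (Nat.le_div_two_of_mem_properDivisors hd))

theorem ArithmeticFunction.sum_moebius_mul_pos {n : ℕ} (hn : n ≠ 0) (f : ℕ → ℤ)
    (hf : ∑ d ∈ n.properDivisors, |f d| < f n) :
    0 < ∑ d ∈ n.divisors, (μ (n / d) : ℤ) * f d := by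
  have hproper : -∑ d ∈ n.properDivisors, |f d| ≤
      ∑ d ∈ n.properDivisors, (μ (n / d) : ℤ) * f d := by
    rw [← sum_neg_distrib]
    refine sum_le_sum fun d _ => (neg_abs_le _).trans' (neg_le_neg ?_)
    rw [abs_mul]
    exact mul_le_of_le_one_left (abs_nonneg _) abs_moebius_le_one
  rw [← Nat.cons_self_properDivisors hn, sum_cons, Nat.div_self (Nat.pos_of_ne_zero hn),
    moebius_apply_one, one_mul]
  linarith

theorem Nat.two_mul_two_pow_pred_sub_one_add_two_div_three (d : ℕ) :
    (2 * (2 ^ (d - 1) - 1) + 2) / 3 = 2 ^ d / 3 := by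
  rcases d with _ | d
  · rfl
  · have := Nat.one_le_two_pow (n := d)
    rw [Nat.add_sub_cancel, pow_succ]
    omega

theorem Nat.sum_range_two_pow_div_three_lt {k : ℕ} (hk : 2 ≤ k) :
    ∑ d ∈ range k, 2 ^ d / 3 < 2 ^ k / 3 := by
  induction k, hk using Nat.le_induction with
  | base => decide
  | succ k _ ih =>
    -- `⌊x/3⌋ + ⌊x/3⌋ ≤ ⌊2x/3⌋`
    rw [sum_range_succ, pow_succ]
    omega

theorem moebius_sum_b_pos (n : ℕ) (hn : 1 < n) :
    0 < ∑ d ∈ n.divisors,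
      (μ (n / d) : ℤ) * (((2 * (2 ^ (d - 1) - 1) + 2) / 3 : ℕ) : ℤ) := by
  simp only [Nat.two_mul_two_pow_pred_sub_one_add_two_div_three]
  refine sum_moebius_mul_pos (by omega) _ ?_
  have hsum : ∑ d ∈ n.properDivisors, 2 ^ d / 3 < 2 ^ n / 3 := calc
    _ ≤ ∑ d ∈ range (n / 2 + 1), 2 ^ d / 3 :=
      sum_le_sum_of_subset (Nat.properDivisors_subset_range_div_two_add_one n)
    _ < 2 ^ (n / 2 + 1) / 3 := Nat.sum_range_two_pow_div_three_lt (by omega)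
    _ ≤ 2 ^ n / 3 := Nat.div_le_div_right (Nat.pow_le_pow_right two_pos (by omega))
  simp only [Nat.abs_cast]
  exact_mod_cast hsum
end

section
/- For every natural number n ≥ 1, the integer sum ∑_{d ∣ n} μ(n/d)·2^d, taken over the positive divisors d of n, is at least 2^{n−1}. -/
/-! The term `d = n` contributes `μ 1 * 2 ^ n = 2 ^ n`. Every other divisor satisfies
`1 ≤ d ≤ n / 2`, so since `|μ| ≤ 1` the remaining terms are bounded in absolute value by
`∑_{d=1}^{n/2} 2 ^ d = 2 ^ (n/2 + 1) - 2 ≤ 2 ^ (n - 1)`. -/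

open ArithmeticFunction ArithmeticFunction.Moebius Finset

namespace Nat

theorem le_div_two_of_mem_properDivisors_s4 {n d : ℕ} (hd : d ∈ n.properDivisors) : d ≤ n / 2 := by
  obtain ⟨⟨k, rfl⟩, hlt⟩ := mem_properDivisors.mp hd
  have hk : 2 ≤ k := by
    by_contra! hk
    interval_cases k <;> omega
  exact (Nat.le_div_iff_mul_le two_pos).mpr (Nat.mul_le_mul_left d hk)

theorem properDivisors_subset_Ioc_div_two (n : ℕ) : n.properDivisors ⊆ Ioc 0 (n / 2) :=
  fun _ hd =>
    mem_Ioc.mpr ⟨pos_of_mem_properDivisors hd, le_div_two_of_mem_properDivisors_s4 hd⟩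

theorem sum_Ioc_zero_two_pow_add_two (k : ℕ) : ∑ d ∈ Ioc 0 k, 2 ^ d + 2 = 2 ^ (k + 1) := by
  induction k with
  | zero => rfl
  | succ k ih => rw [sum_Ioc_succ_top k.zero_le, pow_succ 2 (k + 1), ← ih]; ring

theorem two_pow_div_two_add_one_le (n : ℕ) : 2 ^ (n / 2 + 1) ≤ 2 ^ (n - 1) + 2 := by
  rcases lt_or_ge n 4 with hn | hn
  · interval_cases n <;> norm_num
  · exact (Nat.pow_le_pow_right two_pos (by omega)).trans (Nat.le_add_right _ _)

theorem sum_properDivisors_two_pow_le (n : ℕ) : ∑ d ∈ n.properDivisors, 2 ^ d ≤ 2 ^ (n - 1) := by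
  have hsub := sum_le_sum_of_subset (f := fun d => 2 ^ d) (properDivisors_subset_Ioc_div_two n)
  have := sum_Ioc_zero_two_pow_add_two (n / 2)
  have := two_pow_div_two_add_one_le n
  omega

end Nat

theorem ArithmeticFunction.neg_le_moebius_mul {a : ℤ} (ha : 0 ≤ a) (k : ℕ) : -a ≤ μ k * a := by
  simpa using mul_le_mul_of_nonneg_right (neg_le_of_abs_le (abs_moebius_le_one (n := k))) ha

open ArithmeticFunction ArithmeticFunction.Moebius in
theorem moebius_sum_two_pow_ge (n : ℕ) (hn : 1 ≤ n) :
    (2 : ℤ) ^ (n - 1) ≤ ∑ d ∈ n.divisors, (μ (n / d) : ℤ) * (2 : ℤ) ^ d := by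
  have hproper : -(2 : ℤ) ^ (n - 1) ≤ ∑ d ∈ n.properDivisors, (μ (n / d) : ℤ) * 2 ^ d :=
    calc -(2 : ℤ) ^ (n - 1) ≤ -∑ d ∈ n.properDivisors, (2 : ℤ) ^ d :=
          neg_le_neg (mod_cast Nat.sum_properDivisors_two_pow_le n)
      _ ≤ _ := by
          rw [← sum_neg_distrib]
          exact sum_le_sum fun d _ => neg_le_moebius_mul (by positivity) _
  have htop : (2 : ℤ) ^ n = 2 * 2 ^ (n - 1) := by rw [← pow_succ', Nat.sub_add_cancel hn]
  rw [← Nat.cons_self_properDivisors (by omega), sum_cons, Nat.div_self hn, moebius_apply_one]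
  linarith
end

section
/- For every natural number n ≥ 1, the degree of F n in the variable X equals 2^n, and the degree of G n in the variable X equals 2^n − 1. Likewise, the degree of F n in the variable Y equals 2^n, and the degree of G n in the variable Y equals 2^n − 1. -/
open MvPolynomial

/-- The pair `(Fₙ, Gₙ)` in `ℤ[k, b, X, Y]` (variables `0 ↦ k`, `1 ↦ b`, `2 ↦ X`, `3 ↦ Y`),
defined by `F 1 = k (X² + b Y²)`, `G 1 = X Y`,
`F (n+1) = k ((F n)² + b (G n)²)`, `G (n+1) = (F n) (G n)`. -/
noncomputable def FG : ℕ → MvPolynomial (Fin 4) ℤ × MvPolynomial (Fin 4) ℤ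
  | 0 => (0, 0)
  | 1 => (X 0 * (X 2 ^ 2 + X 1 * X 3 ^ 2), X 2 * X 3)
  | n + 2 =>
      (X 0 * ((FG (n + 1)).1 ^ 2 + X 1 * (FG (n + 1)).2 ^ 2),
        (FG (n + 1)).1 * (FG (n + 1)).2)

noncomputable def F (n : ℕ) : MvPolynomial (Fin 4) ℤ := (FG n).1
noncomputable def G (n : ℕ) : MvPolynomial (Fin 4) ℤ := (FG n).2

/-- The single-variable shadow of the pair `(Fₙ, Gₙ)` under `k ↦ 1, b ↦ 1` and
one of `X, Y ↦ 1`, the other `↦ X`. -/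
noncomputable def fg : ℕ → Polynomial ℤ × Polynomial ℤ
  | 0 => (0, 0)
  | 1 => (Polynomial.X ^ 2 + 1, Polynomial.X)
  | n + 2 =>
      ((fg (n + 1)).1 ^ 2 + (fg (n + 1)).2 ^ 2, (fg (n + 1)).1 * (fg (n + 1)).2)

lemma natDegree_aeval_le (i : Fin 4) (v : Fin 4 → Polynomial ℤ)
    (hv : ∀ j, (v j).natDegree ≤ if j = i then 1 else 0)
    (p : MvPolynomial (Fin 4) ℤ) :
    ((aeval v) p).natDegree ≤ degreeOf i p := by
  conv_lhs => rw [p.as_sum]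
  rw [map_sum]
  apply Polynomial.natDegree_sum_le_of_forall_le
  intro m hm
  rw [aeval_monomial]
  refine le_trans (Polynomial.natDegree_mul_le) ?_
  have h1 : (algebraMap ℤ (Polynomial ℤ) (coeff m p)).natDegree = 0 := by
    simp [Polynomial.natDegree_C]
  rw [h1, zero_add]
  refine le_trans ?_ (monomial_le_degreeOf i hm)
  rw [Finsupp.prod]
  refine le_trans (Polynomial.natDegree_prod_le _ _) ?_
  calc ∑ j ∈ m.support, ((v j) ^ m j).natDegree
      ≤ ∑ j ∈ m.support, (if j = i then m j else 0) := by
        apply Finset.sum_le_sum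
        intro j _
        refine le_trans (Polynomial.natDegree_pow_le) ?_
        have hj := hv j
        by_cases h : j = i
        · subst h
          simp only [if_pos rfl] at hj ⊢
          exact le_trans (Nat.mul_le_mul_left (m j) hj) (by simp)
        · simp only [if_neg h] at hj ⊢
          simp [Nat.le_zero.mp hj]
    _ ≤ m i := by
        rw [Finset.sum_ite_eq' m.support i (fun j => m j)]
        split <;> simp

lemma aeval_FG (v : Fin 4 → Polynomial ℤ) (h0 : v 0 = 1) (h1 : v 1 = 1)
    (hF : aeval v (F 1) = (fg 1).1) (hG : aeval v (G 1) = (fg 1).2) :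
    ∀ n : ℕ, aeval v (F (n + 1)) = (fg (n + 1)).1 ∧
      aeval v (G (n + 1)) = (fg (n + 1)).2 := by
  intro n
  induction n with
  | zero => exact ⟨hF, hG⟩
  | succ m ih =>
    obtain ⟨ihF, ihG⟩ := ih
    constructor
    · show aeval v (FG (m + 2)).1 = (fg (m + 2)).1
      simp only [FG, fg, map_mul, map_add, map_pow, aeval_X, h0, h1]
      rw [show (FG (m+1)).1 = F (m+1) from rfl, show (FG (m+1)).2 = G (m+1) from rfl,
        ihF, ihG]
      ring
    · show aeval v (FG (m + 2)).2 = (fg (m + 2)).2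
      simp only [FG, fg, map_mul]
      rw [show (FG (m+1)).1 = F (m+1) from rfl, show (FG (m+1)).2 = G (m+1) from rfl,
        ihF, ihG]

lemma natDegree_fg : ∀ n : ℕ, ((fg (n + 1)).1).natDegree = 2 ^ (n + 1) ∧
    ((fg (n + 1)).2).natDegree = 2 ^ (n + 1) - 1 := by
  intro n
  induction n with
  | zero =>
    constructor
    · show (Polynomial.X ^ 2 + 1 : Polynomial ℤ).natDegree = 2
      rw [show (1 : Polynomial ℤ) = Polynomial.C 1 by simp]
      exact Polynomial.natDegree_X_pow_add_C
    · show (Polynomial.X : Polynomial ℤ).natDegree = 2 ^ 1 - 1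
      simp
  | succ m ih =>
    obtain ⟨ha, hb⟩ := ih
    set a := (fg (m + 1)).1 with hadef
    set b := (fg (m + 1)).2 with hbdef
    have hpow : (1 : ℕ) ≤ 2 ^ (m + 1) := Nat.one_le_two_pow
    have ha0 : a ≠ 0 := by
      intro h; rw [h, Polynomial.natDegree_zero] at ha; omega
    have hb0 : b ≠ 0 := by
      intro h; rw [h, Polynomial.natDegree_zero] at hb; omega
    have haa : (a ^ 2).natDegree = 2 ^ (m + 2) := by
      rw [sq, Polynomial.natDegree_mul ha0 ha0, ha]; ring
    have hbb : (b ^ 2).natDegree = 2 * (2 ^ (m + 1) - 1) := by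
      rw [sq, Polynomial.natDegree_mul hb0 hb0, hb]; ring
    constructor
    · show (a ^ 2 + b ^ 2).natDegree = 2 ^ (m + 2)
      rw [Polynomial.natDegree_add_eq_left_of_natDegree_lt, haa]
      rw [haa, hbb]
      have : (2:ℕ) ^ (m + 2) = 2 * 2 ^ (m + 1) := by ring
      omega
    · show (a * b).natDegree = 2 ^ (m + 2) - 1
      rw [Polynomial.natDegree_mul ha0 hb0, ha, hb]
      have : (2:ℕ) ^ (m + 2) = 2 * 2 ^ (m + 1) := by ring
      omega

lemma degreeOf_FG_le (i : Fin 4) (hi : i = 2 ∨ i = 3) :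
    ∀ n : ℕ, degreeOf i (F (n + 1)) ≤ 2 ^ (n + 1) ∧
      degreeOf i (G (n + 1)) ≤ 2 ^ (n + 1) - 1 := by
  have hX0 : degreeOf i (X 0 : MvPolynomial (Fin 4) ℤ) = 0 := by
    rcases hi with h | h <;> subst h <;> rw [degreeOf_X] <;> simp
  have hX1 : degreeOf i (X 1 : MvPolynomial (Fin 4) ℤ) = 0 := by
    rcases hi with h | h <;> subst h <;> rw [degreeOf_X] <;> simp
  have hXle : ∀ j : Fin 4, degreeOf i (X j : MvPolynomial (Fin 4) ℤ) ≤ 1 := by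
    intro j; rw [degreeOf_X]; split <;> simp
  intro n
  induction n with
  | zero =>
    constructor
    · show degreeOf i (X 0 * (X 2 ^ 2 + X 1 * X 3 ^ 2)) ≤ 2
      refine le_trans (degreeOf_mul_le _ _ _) ?_
      rw [hX0, zero_add]
      refine le_trans (degreeOf_add_le _ _ _) (max_le ?_ ?_)
      · exact le_trans (degreeOf_pow_le _ _ _) (by simpa using Nat.mul_le_mul_left 2 (hXle 2))
      · refine le_trans (degreeOf_mul_le _ _ _) ?_
        rw [hX1, zero_add]
        exact le_trans (degreeOf_pow_le _ _ _) (by simpa using Nat.mul_le_mul_left 2 (hXle 3))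
    · show degreeOf i (X 2 * X 3) ≤ 1
      refine le_trans (degreeOf_mul_le _ _ _) ?_
      rcases hi with h | h <;> subst h <;> rw [degreeOf_X, degreeOf_X] <;> simp
  | succ m ih =>
    obtain ⟨ihF, ihG⟩ := ih
    have hpow : (1 : ℕ) ≤ 2 ^ (m + 1) := Nat.one_le_two_pow
    have h2 : (2:ℕ) ^ (m + 2) = 2 * 2 ^ (m + 1) := by ring
    constructor
    · show degreeOf i (X 0 * ((FG (m+1)).1 ^ 2 + X 1 * (FG (m+1)).2 ^ 2)) ≤ 2 ^ (m + 2)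
      refine le_trans (degreeOf_mul_le _ _ _) ?_
      rw [hX0, zero_add]
      refine le_trans (degreeOf_add_le _ _ _) (max_le ?_ ?_)
      · refine le_trans (degreeOf_pow_le _ _ _) ?_
        calc 2 * degreeOf i (FG (m+1)).1 ≤ 2 * 2 ^ (m + 1) :=
              Nat.mul_le_mul_left 2 ihF
          _ = 2 ^ (m + 2) := h2.symm
      · refine le_trans (degreeOf_mul_le _ _ _) ?_
        rw [hX1, zero_add]
        refine le_trans (degreeOf_pow_le _ _ _) ?_
        calc 2 * degreeOf i (FG (m+1)).2 ≤ 2 * (2 ^ (m + 1) - 1) :=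
              Nat.mul_le_mul_left 2 ihG
          _ ≤ 2 ^ (m + 2) := by omega
    · show degreeOf i ((FG (m+1)).1 * (FG (m+1)).2) ≤ 2 ^ (m + 2) - 1
      refine le_trans (degreeOf_mul_le _ _ _) ?_
      calc degreeOf i (FG (m+1)).1 + degreeOf i (FG (m+1)).2
          ≤ 2 ^ (m + 1) + (2 ^ (m + 1) - 1) := Nat.add_le_add ihF ihG
        _ ≤ 2 ^ (m + 2) - 1 := by omega

theorem degreeOf_F_G (n : ℕ) (hn : 1 ≤ n) :
    degreeOf 2 (F n) = 2 ^ n ∧ degreeOf 2 (G n) = 2 ^ n - 1 ∧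
    degreeOf 3 (F n) = 2 ^ n ∧ degreeOf 3 (G n) = 2 ^ n - 1 := by
  obtain ⟨m, rfl⟩ : ∃ m, n = m + 1 := ⟨n - 1, by omega⟩
  set vX : Fin 4 → Polynomial ℤ := ![1, 1, Polynomial.X, 1] with hvX
  set vY : Fin 4 → Polynomial ℤ := ![1, 1, 1, Polynomial.X] with hvY
  have hvX' : ∀ j, (vX j).natDegree ≤ if j = 2 then 1 else 0 := by
    intro j; fin_cases j <;> simp [hvX]
  have hvY' : ∀ j, (vY j).natDegree ≤ if j = 3 then 1 else 0 := by
    intro j; fin_cases j <;> simp [hvY]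
  have hX := aeval_FG vX (by simp [hvX]) (by simp [hvX])
    (by show aeval vX (FG 1).1 = _; simp [FG, fg, hvX]; try ring)
    (by show aeval vX (FG 1).2 = _; simp [FG, fg, hvX]) m
  have hY := aeval_FG vY (by simp [hvY]) (by simp [hvY])
    (by show aeval vY (FG 1).1 = _; simp [FG, fg, hvY]; try ring)
    (by show aeval vY (FG 1).2 = _; simp [FG, fg, hvY]) m
  have hdeg := natDegree_fg m
  have hle2 := degreeOf_FG_le 2 (Or.inl rfl) m
  have hle3 := degreeOf_FG_le 3 (Or.inr rfl) m
  refine ⟨le_antisymm hle2.1 ?_, le_antisymm hle2.2 ?_,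
    le_antisymm hle3.1 ?_, le_antisymm hle3.2 ?_⟩
  · calc 2 ^ (m + 1) = ((aeval vX) (F (m + 1))).natDegree := by rw [hX.1, hdeg.1]
      _ ≤ degreeOf 2 (F (m + 1)) := natDegree_aeval_le 2 vX hvX' _
  · calc 2 ^ (m + 1) - 1 = ((aeval vX) (G (m + 1))).natDegree := by rw [hX.2, hdeg.2]
      _ ≤ degreeOf 2 (G (m + 1)) := natDegree_aeval_le 2 vX hvX' _
  · calc 2 ^ (m + 1) = ((aeval vY) (F (m + 1))).natDegree := by rw [hY.1, hdeg.1]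
      _ ≤ degreeOf 3 (F (m + 1)) := natDegree_aeval_le 3 vY hvY' _
  · calc 2 ^ (m + 1) - 1 = ((aeval vY) (G (m + 1))).natDegree := by rw [hY.2, hdeg.2]
      _ ≤ degreeOf 3 (G (m + 1)) := natDegree_aeval_le 3 vY hvY' _
end

section
/- For every natural number n ≥ 1, the coefficient of X^{2^n} in F n, viewed as a polynomial in the single variable X with coefficients in ℤ[k, b, Y], equals k^{2^n − 1}. Equivalently, the only exponent vector in the support of F n whose X-exponent equals 2^n is the monomial k^{2^n − 1}·X^{2^n}, and it occurs with coefficient 1. -/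
open MvPolynomial

/-!
Grade `ℤ[k, b, X, Y]` by the degree in `X`. Starting from `(X, Y)`, one step of the recursion
sends `(p, q)` to `(k (p² + b q²), p q)`, and `F 1, G 1` is the step applied to `(X, Y)`.
If `p` has `X`-degree at most `d` and `q` less than `d`, then `k b q²` has `X`-degree less
than `2d`, so the `X`-degree-`2d` part of the new `p` is `k` times the square of the
`X`-degree-`d` part of `p`. Hence that part of `F n` is `k^(2^n - 1) X^(2^n)` by induction.
-/

theorem weightedHomogeneousComponent_mul_of_weightedTotalDegree_le {σ R M : Type*}
    [CommSemiring R] [AddCommMonoid M] [SemilatticeSup M] [OrderBot M]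
    [AddLeftStrictMono M] [AddRightStrictMono M]
    {w : σ → M} {p q : MvPolynomial σ R} {a b : M}
    (hp : weightedTotalDegree w p ≤ a) (hq : weightedTotalDegree w q ≤ b) :
    weightedHomogeneousComponent w (a + b) (p * q) =
      weightedHomogeneousComponent w a p * weightedHomogeneousComponent w b q := by
  classical
  ext m
  simp only [coeff_weightedHomogeneousComponent, coeff_mul]
  split_ifs with hm
  · refine Finset.sum_congr rfl fun uv huv => ?_
    rw [Finset.HasAntidiagonal.mem_antidiagonal] at huv
    by_cases hu : coeff uv.1 p = 0
    · simp [hu]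
    by_cases hv : coeff uv.2 q = 0
    · simp [hv]
    have hua := (le_weightedTotalDegree w (mem_support_iff.mpr hu)).trans hp
    have hvb := (le_weightedTotalDegree w (mem_support_iff.mpr hv)).trans hq
    have hsum : Finsupp.weight w uv.1 + Finsupp.weight w uv.2 = a + b := by
      rw [← map_add, huv, hm]
    obtain ⟨rfl, rfl⟩ := (add_eq_add_iff_eq_and_eq hua hvb).mp hsum
    simp
  · refine (Finset.sum_eq_zero fun uv huv => ?_).symm
    rw [Finset.HasAntidiagonal.mem_antidiagonal] at huv
    split_ifs with hu hv
    · exact absurd (by rw [← huv, map_add, hu, hv]) hm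
    all_goals simp

lemma F_succ (n : ℕ) (hn : 1 ≤ n) : F (n + 1) = X 0 * (F n ^ 2 + X 1 * G n ^ 2) := by
  obtain ⟨m, rfl⟩ := Nat.exists_eq_add_of_le' hn
  rfl

lemma G_succ (n : ℕ) (hn : 1 ≤ n) : G (n + 1) = F n * G n := by
  obtain ⟨m, rfl⟩ := Nat.exists_eq_add_of_le' hn
  rfl

abbrev xWeight : Fin 4 → ℕ := Pi.single 2 1

lemma weightedTotalDegree_xWeight (p : MvPolynomial (Fin 4) ℤ) :
    weightedTotalDegree xWeight p = degreeOf 2 p :=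
  weightedTotalDegree_piSingle 2 p

structure HasXTop (d : ℕ) (p q : MvPolynomial (Fin 4) ℤ) : Prop where
  degreeOf_fst_le : degreeOf 2 p ≤ d
  degreeOf_snd_lt : degreeOf 2 q < d
  xComponent_fst :
    weightedHomogeneousComponent xWeight d p =
      monomial (Finsupp.single 0 (d - 1) + Finsupp.single 2 d) 1

lemma hasXTop_X : HasXTop 1 (X 2) (X 3) where
  degreeOf_fst_le := by simp
  degreeOf_snd_lt := by simp [degreeOf_X_of_ne (show (2 : Fin 4) ≠ 3 by decide)]
  xComponent_fst := by
    have hX : IsWeightedHomogeneous xWeight (X 2 : MvPolynomial (Fin 4) ℤ) 1 :=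
      isWeightedHomogeneous_X ℤ xWeight 2
    rw [hX.weightedHomogeneousComponent_same]
    simp [X]

lemma HasXTop.step {d : ℕ} {p q : MvPolynomial (Fin 4) ℤ} (h : HasXTop d p q) (hd : 1 ≤ d) :
    HasXTop (2 * d) (X 0 * (p ^ 2 + X 1 * q ^ 2)) (p * q) := by
  have hp2 : degreeOf 2 (p ^ 2) ≤ 2 * d :=
    (degreeOf_pow_le _ _ _).trans (Nat.mul_le_mul_left 2 h.degreeOf_fst_le)
  have hq2 : degreeOf 2 (X 1 * q ^ 2) < 2 * d := by
    rw [mul_comm, degreeOf_mul_X_of_ne _ (by decide)]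
    exact (degreeOf_pow_le _ _ _).trans_lt (by have := h.degreeOf_snd_lt; omega)
  have hsum : degreeOf 2 (p ^ 2 + X 1 * q ^ 2) ≤ 2 * d :=
    (degreeOf_add_le _ _ _).trans (max_le hp2 hq2.le)
  refine ⟨?_, ?_, ?_⟩
  · rwa [mul_comm, degreeOf_mul_X_of_ne _ (by decide)]
  · have := h.degreeOf_fst_le
    have := h.degreeOf_snd_lt
    exact (degreeOf_mul_le _ _ _).trans_lt (by omega)
  · have hk : IsWeightedHomogeneous xWeight (X 0 : MvPolynomial (Fin 4) ℤ) 0 :=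
      isWeightedHomogeneous_X ℤ xWeight 0
    have hp := h.degreeOf_fst_le
    rw [← weightedTotalDegree_xWeight] at hp hsum hq2
    calc weightedHomogeneousComponent xWeight (2 * d) (X 0 * (p ^ 2 + X 1 * q ^ 2))
        = weightedHomogeneousComponent xWeight 0 (X 0) *
            weightedHomogeneousComponent xWeight (2 * d) (p ^ 2 + X 1 * q ^ 2) := by
          rw [← weightedHomogeneousComponent_mul_of_weightedTotalDegree_le ?_ hsum, zero_add]
          rw [weightedTotalDegree_xWeight, degreeOf_X_of_ne (by decide)]
      _ = X 0 * (weightedHomogeneousComponent xWeight d p) ^ 2 := by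
          rw [hk.weightedHomogeneousComponent_same, map_add,
            weightedHomogeneousComponent_eq_zero _ _ hq2, add_zero, sq, sq, two_mul,
            weightedHomogeneousComponent_mul_of_weightedTotalDegree_le hp hp]
      _ = monomial (Finsupp.single 0 (2 * d - 1) + Finsupp.single 2 (2 * d)) 1 := by
          rw [h.xComponent_fst, X, monomial_pow, monomial_mul, one_pow, one_mul]
          congr 2
          ext i
          fin_cases i <;> simp
          omega

lemma hasXTop_F_G (n : ℕ) (hn : 1 ≤ n) : HasXTop (2 ^ n) (F n) (G n) := by
  induction n, hn using Nat.le_induction with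
  | base => exact hasXTop_X.step le_rfl
  | succ n hn ih =>
    rw [F_succ n hn, G_succ n hn, pow_succ']
    exact ih.step Nat.one_le_two_pow

/-- The coefficient of `X^(2^n)` in `F n`: the unique exponent vector in the support of
`F n` with `X`-exponent `2^n` is that of `k^(2^n - 1) * X^(2^n)`, with coefficient `1`. -/
theorem coeff_X_pow_F (n : ℕ) (hn : 1 ≤ n) :
    (∀ m ∈ (F n).support, m 2 = 2 ^ n →
        m = Finsupp.single (0 : Fin 4) (2 ^ n - 1) + Finsupp.single 2 (2 ^ n)) ∧
    coeff (Finsupp.single (0 : Fin 4) (2 ^ n - 1) + Finsupp.single 2 (2 ^ n)) (F n) = 1 := by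
  have hcoeff (m : Fin 4 →₀ ℕ) (hm : m 2 = 2 ^ n) : coeff m (F n) =
      coeff m (monomial (Finsupp.single 0 (2 ^ n - 1) + Finsupp.single 2 (2 ^ n)) 1) := by
    rw [← (hasXTop_F_G n hn).xComponent_fst, coeff_weightedHomogeneousComponent,
      Finsupp.weight_single_one_apply, if_pos hm]
  refine ⟨fun m hm hm2 => ?_, ?_⟩
  · by_contra hne
    rw [mem_support_iff, hcoeff m hm2, coeff_monomial, if_neg (Ne.symm hne)] at hm
    exact hm rfl
  · rw [hcoeff _ (by simp), coeff_monomial, if_pos rfl]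
end

section
/- For every natural number n ≥ 1, the coefficient of X^{2^n − 1} in G n, viewed as a polynomial in the single variable X with coefficients in ℤ[k, b, Y], equals k^{2^n − n − 1}·Y. Equivalently, the only exponent vector in the support of G n whose X-exponent equals 2^n − 1 is the monomial k^{2^n − n − 1}·X^{2^n − 1}·Y, and it occurs with coefficient 1. -/
open MvPolynomial

/-!
Call the monomial `x^s` the leading term of `p` in the variable `X` if `p - x^s` only involves
lower powers of `X`. Leading terms multiply, and they survive adding terms of lower `X`-degree.
Since `b G n²` has lower `X`-degree than `F n²`, induction from `(X, Y)`, which the recursion maps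
to `(F 1, G 1)`, shows that the leading terms of `F n` and `G n` are `k^(2^n - 1) X^(2^n)` and
`k^(2^n - n - 1) X^(2^n - 1) Y`.
-/

namespace MvPolynomial

section CommSemiring

variable {σ R : Type*} [CommSemiring R]

theorem degreeOf_monomial_le (s : σ →₀ ℕ) (i : σ) (a : R) :
    (monomial s a).degreeOf i ≤ s i :=
  degreeOf_le_iff.2 fun m hm => by rw [Finset.mem_singleton.1 (support_monomial_subset hm)]

theorem lt_of_mem_support_mul {i : σ} {a : ℕ} {p q : MvPolynomial σ R}
    (hp : ∀ m ∈ p.support, m i < a) {m : σ →₀ ℕ} (hm : m ∈ (p * q).support) :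
    m i < a + q.degreeOf i := by
  classical
  obtain ⟨x, hx, y, hy, rfl⟩ := Finset.mem_add.1 (support_mul p q hm)
  have hxi := hp x hx
  have hyi := monomial_le_degreeOf i hy
  rw [Finsupp.add_apply]
  omega

end CommSemiring

variable {σ R : Type*} [CommRing R]

def IsLeadingTermIn (i : σ) (s : σ →₀ ℕ) (p : MvPolynomial σ R) : Prop :=
  ∀ m ∈ (p - monomial s 1).support, m i < s i

theorem isLeadingTermIn_monomial (i : σ) (s : σ →₀ ℕ) :
    IsLeadingTermIn i s (monomial s (1 : R)) := by
  simp [IsLeadingTermIn]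

theorem isLeadingTermIn_X (i j : σ) :
    IsLeadingTermIn i (Finsupp.single j 1) (X j : MvPolynomial σ R) :=
  isLeadingTermIn_monomial i _

namespace IsLeadingTermIn

variable {i : σ} {s t : σ →₀ ℕ} {p q : MvPolynomial σ R}

theorem coeff_eq_one (h : IsLeadingTermIn i s p) : coeff s p = 1 := by
  classical
  have : coeff s (p - monomial s 1) = 0 := notMem_support_iff.1 fun hs => (h s hs).false
  rwa [coeff_sub, coeff_monomial, if_pos rfl, sub_eq_zero] at this

theorem eq_of_mem_support (h : IsLeadingTermIn i s p) {m : σ →₀ ℕ} (hm : m ∈ p.support)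
    (hmi : m i = s i) : m = s := by
  classical
  by_contra hne
  have : m ∈ (p - monomial s 1).support := by
    rwa [mem_support_iff, coeff_sub, coeff_monomial, if_neg (Ne.symm hne), sub_zero,
      ← mem_support_iff]
  exact (h m this).ne hmi

theorem degreeOf_le (h : IsLeadingTermIn i s p) : p.degreeOf i ≤ s i := by
  rw [← sub_add_cancel p (monomial s 1)]
  refine (degreeOf_add_le _ _ _).trans (max_le ?_ (degreeOf_monomial_le _ _ _))
  exact degreeOf_le_iff.2 fun m hm => (h m hm).le

theorem mul (hp : IsLeadingTermIn i s p) (hq : IsLeadingTermIn i t q) :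
    IsLeadingTermIn i (s + t) (p * q) := by
  classical
  have hsplit : p * q - monomial (s + t) 1 =
      (p - monomial s 1) * q + (q - monomial t 1) * monomial s 1 := by
    rw [show monomial (s + t) (1 : R) = monomial s 1 * monomial t 1 by
      rw [monomial_mul, one_mul]]
    ring
  intro m hm
  rw [hsplit] at hm
  rw [Finsupp.add_apply]
  rcases Finset.mem_union.1 (support_add hm) with hm | hm
  · have := lt_of_mem_support_mul hp hm
    have := hq.degreeOf_le
    omega
  · have := lt_of_mem_support_mul hq hm
    have := degreeOf_monomial_le s i (1 : R)
    omega

theorem pow (h : IsLeadingTermIn i s p) (n : ℕ) : IsLeadingTermIn i (n • s) (p ^ n) := by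
  induction n with
  | zero => simpa using isLeadingTermIn_monomial (R := R) i 0
  | succ n ih => rw [pow_succ, succ_nsmul]; exact ih.mul h

theorem add_of_degreeOf_lt (hp : IsLeadingTermIn i s p) (hq : q.degreeOf i < s i) :
    IsLeadingTermIn i s (p + q) := by
  classical
  intro m hm
  rw [add_sub_right_comm] at hm
  rcases Finset.mem_union.1 (support_add hm) with hm | hm
  · exact hp m hm
  · exact (monomial_le_degreeOf i hm).trans_lt hq

end IsLeadingTermIn

end MvPolynomial

noncomputable def FGStep (p : MvPolynomial (Fin 4) ℤ × MvPolynomial (Fin 4) ℤ) :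
    MvPolynomial (Fin 4) ℤ × MvPolynomial (Fin 4) ℤ :=
  (X 0 * (p.1 ^ 2 + X 1 * p.2 ^ 2), p.1 * p.2)

theorem FG_eq_iterate (n : ℕ) : FG (n + 1) = FGStep^[n + 1] (X 2, X 3) := by
  induction n with
  | zero => rfl
  | succ n ih => rw [Function.iterate_succ_apply', ← ih, FG, FGStep]

theorem isLeadingTermIn_FGStep {x : MvPolynomial (Fin 4) ℤ × MvPolynomial (Fin 4) ℤ}
    {s t : Fin 4 →₀ ℕ} (h₁ : IsLeadingTermIn 2 s x.1) (h₂ : IsLeadingTermIn 2 t x.2)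
    (hts : t 2 < s 2) :
    IsLeadingTermIn 2 (Finsupp.single 0 1 + 2 • s) (FGStep x).1 ∧
      IsLeadingTermIn 2 (s + t) (FGStep x).2 := by
  refine ⟨(isLeadingTermIn_X (R := ℤ) 2 0).mul ((h₁.pow 2).add_of_degreeOf_lt ?_),
    h₁.mul h₂⟩
  calc (X 1 * x.2 ^ 2).degreeOf 2
      ≤ (X 1 : MvPolynomial (Fin 4) ℤ).degreeOf 2 + 2 * x.2.degreeOf 2 :=
        (degreeOf_mul_le _ _ _).trans (Nat.add_le_add_left (degreeOf_pow_le _ _ _) _)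
    _ ≤ 0 + 2 * t 2 := by rw [degreeOf_X_of_ne (by decide)]; gcongr; exact h₂.degreeOf_le
    _ < (2 • s) 2 := by simpa using hts

noncomputable def leadExpF (n : ℕ) : Fin 4 →₀ ℕ :=
  Finsupp.single 0 (2 ^ n - 1) + Finsupp.single 2 (2 ^ n)

noncomputable def leadExpG (n : ℕ) : Fin 4 →₀ ℕ :=
  Finsupp.single 0 (2 ^ n - n - 1) + Finsupp.single 2 (2 ^ n - 1) + Finsupp.single 3 1

theorem single_add_two_nsmul_leadExpF (n : ℕ) :
    Finsupp.single 0 1 + 2 • leadExpF n = leadExpF (n + 1) := by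
  have := Nat.one_le_two_pow (n := n)
  ext i
  fin_cases i <;> simp [leadExpF, pow_succ] <;> omega

theorem leadExpF_add_leadExpG (n : ℕ) : leadExpF n + leadExpG n = leadExpG (n + 1) := by
  have := Nat.lt_two_pow_self (n := n)
  ext i
  fin_cases i <;> simp [leadExpF, leadExpG, pow_succ] <;> omega

theorem isLeadingTermIn_iterate_FGStep (n : ℕ) :
    IsLeadingTermIn 2 (leadExpF n) (FGStep^[n] (X 2, X 3)).1 ∧
      IsLeadingTermIn 2 (leadExpG n) (FGStep^[n] (X 2, X 3)).2 := by
  induction n with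
  | zero =>
    exact ⟨by simpa [leadExpF] using isLeadingTermIn_X 2 2,
      by simpa [leadExpG] using isLeadingTermIn_X 2 3⟩
  | succ n ih =>
    rw [Function.iterate_succ_apply', ← single_add_two_nsmul_leadExpF, ← leadExpF_add_leadExpG]
    exact isLeadingTermIn_FGStep ih.1 ih.2 (by simp [leadExpF, leadExpG])

/-- The coefficient of `X^(2^n - 1)` in `G n`: the unique exponent vector in the support of
`G n` with `X`-exponent `2^n - 1` is that of `k^(2^n - n - 1) * X^(2^n - 1) * Y`,
with coefficient `1`. -/
theorem coeff_X_pow_G (n : ℕ) (hn : 1 ≤ n) :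
    (∀ m ∈ (G n).support, m 2 = 2 ^ n - 1 →
        m = Finsupp.single (0 : Fin 4) (2 ^ n - n - 1) + Finsupp.single 2 (2 ^ n - 1) +
          Finsupp.single 3 1) ∧
    coeff
      (Finsupp.single (0 : Fin 4) (2 ^ n - n - 1) + Finsupp.single 2 (2 ^ n - 1) +
        Finsupp.single 3 1) (G n) = 1 := by
  obtain ⟨n, rfl⟩ := Nat.exists_eq_add_of_le' hn
  have h : IsLeadingTermIn 2 (leadExpG (n + 1)) (G (n + 1)) := by
    rw [G, FG_eq_iterate]
    exact (isLeadingTermIn_iterate_FGStep (n + 1)).2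
  exact ⟨fun m hm hm2 => h.eq_of_mem_support hm (by simpa [leadExpG] using hm2),
    h.coeff_eq_one⟩
end

section
/- For each natural number n ≥ 1, define a(n) to be the natural number with 3·a(n) = 2^n − (−1)^n, and define β(n) = ⌈2(2^{n−1} − 1)/3⌉ (as a natural number, β(n) = (2·(2^{n−1} − 1) + 2)/3 with integer division). Then in the ring R = ℤ[k, b, X, Y], the element k^{a(n)} divides F n and the element k^{β(n)} divides G n. -/
open MvPolynomial

/-- Exponent pair `(A n, B n)`. -/
def AB : ℕ → ℕ × ℕ
  | 0 => (0, 0)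
  | 1 => (1, 0)
  | n + 2 => (2 * (AB (n + 1)).2 + 1, (AB (n + 1)).1 + (AB (n + 1)).2)

lemma AB_arith (n : ℕ) (hn : 1 ≤ n) :
    (3 * (AB n).1 = 2 ^ n + 1 ∧ 3 * (AB n).2 + 2 = 2 ^ n) ∨
    (3 * (AB n).1 + 1 = 2 ^ n ∧ 3 * (AB n).2 + 1 = 2 ^ n) := by
  induction n with
  | zero => omega
  | succ m ih =>
    match m, ih with
    | 0, _ => left; simp [AB]
    | m + 1, ih =>
      have ih := ih (by omega)
      have hp : 2 ^ (m + 2) = 2 * 2 ^ (m + 1) := by ring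
      simp only [AB] at *
      omega

lemma key (n : ℕ) (hn : 1 ≤ n) :
    (X 0 : MvPolynomial (Fin 4) ℤ) ^ (AB n).1 ∣ F n ∧
    (X 0 : MvPolynomial (Fin 4) ℤ) ^ (AB n).2 ∣ G n ∧
    (AB n).2 ≤ (AB n).1 ∧ (AB n).1 ≤ (AB n).2 + 1 := by
  induction n with
  | zero => omega
  | succ m ih =>
    match m, ih with
    | 0, _ =>
      refine ⟨?_, ?_, by simp [AB], by simp [AB]⟩
      · simp only [AB, F, FG, pow_one]; exact dvd_mul_right _ _
      · simp [AB]
    | m + 1, ih =>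
      obtain ⟨hF, hG, hBA, hAB⟩ := ih (by omega)
      have hFe : F (m + 2) = X 0 * (F (m + 1) ^ 2 + X 1 * G (m + 1) ^ 2) := rfl
      have hGe : G (m + 2) = F (m + 1) * G (m + 1) := rfl
      set A := (AB (m + 1)).1
      set B := (AB (m + 1)).2
      have hA2 : (AB (m + 1 + 1)).1 = 2 * B + 1 := rfl
      have hB2 : (AB (m + 1 + 1)).2 = A + B := rfl
      refine ⟨?_, ?_, by omega, by omega⟩
      · rw [hFe, hA2, pow_succ, mul_comm (X 0 ^ (2 * B)) (X 0)]
        refine mul_dvd_mul_left _ (dvd_add ?_ ?_)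
        · calc (X 0 : MvPolynomial (Fin 4) ℤ) ^ (2 * B) ∣ X 0 ^ (2 * A) :=
              pow_dvd_pow _ (by omega)
          _ ∣ F (m + 1) ^ 2 := by
              rw [mul_comm 2 A, pow_mul]; exact pow_dvd_pow_of_dvd hF 2
        · refine Dvd.dvd.mul_left ?_ _
          rw [mul_comm 2 B, pow_mul]; exact pow_dvd_pow_of_dvd hG 2
      · rw [hGe, hB2, pow_add]; exact mul_dvd_mul hF hG

/-- `k^(a n) ∣ F n` and `k^(β n) ∣ G n`, where `3 * a n = 2^n - (-1)^n` and
`β n = ⌈2 (2^(n-1) - 1) / 3⌉`. -/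
theorem k_pow_dvd_F_G (n : ℕ) (hn : 1 ≤ n) (a : ℕ) (ha : (3 : ℤ) * a = 2 ^ n - (-1) ^ n) :
    (X 0 : MvPolynomial (Fin 4) ℤ) ^ a ∣ F n ∧
    (X 0 : MvPolynomial (Fin 4) ℤ) ^ ((2 * (2 ^ (n - 1) - 1) + 2) / 3) ∣ G n := by
  obtain ⟨hF, hG, -, -⟩ := key n hn
  have harith := AB_arith n hn
  have hε : ((-1 : ℤ)) ^ n = 1 ∨ ((-1 : ℤ)) ^ n = -1 := by
    rcases Nat.even_or_odd n with h | h
    · exact Or.inl h.neg_one_pow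
    · exact Or.inr h.neg_one_pow
  have hpz : ((2 : ℤ)) ^ n = ((2 ^ n : ℕ) : ℤ) := by push_cast; ring
  have haA : a = (AB n).1 := by
    rcases harith with ⟨h1, h2⟩ | ⟨h1, h2⟩ <;> rcases hε with h | h <;>
      rw [h, hpz] at ha <;> omega
  have hβ : (2 * (2 ^ (n - 1) - 1) + 2) / 3 = (AB n).2 := by
    have h1 : 1 ≤ 2 ^ (n - 1) := Nat.one_le_two_pow
    have h2 : 2 ^ n = 2 * 2 ^ (n - 1) := by
      conv_lhs => rw [← Nat.sub_add_cancel hn]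
      rw [pow_succ]; ring
    omega
  rw [haA, hβ]
  exact ⟨hF, hG⟩
end

section
/- For every natural number n ≥ 1, every monomial k^α·b^β·X^γ·Y^δ occurring in the support of the n-th period polynomial Φ n = Y·(F n) − X·(G n) satisfies: γ is even, δ = 2^n + 1 − γ, and β = 2^{n−1} − γ/2. (That is, Φ n is Y times a polynomial of the form ∑_{i=0}^{2^{n−1}} e_i·X^{2i}·Y^{2^n − 2i}·b^{2^{n−1} − i} with e_i ∈ ℤ[k].) -/
open MvPolynomial

/-! Grade `ℤ[k, b, X, Y]` by `ℤ × ℤ` with `k ↦ (0, 0)`, `b ↦ (0, -2)`, `X ↦ (1, 0)`, `Y ↦ (1, 1)`,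
so that `k^α b^β X^γ Y^δ` has degree `(γ + δ, δ - 2β)`. The recursion preserves homogeneity:
`F n` and `G n` are homogeneous of degrees `(2^n, 0)` and `(2^n, 1)`, hence `Φ n` of degree
`(2^n + 1, 1)`. The two linear relations `γ + δ = 2^n + 1` and `δ = 2β + 1` are the claim. -/

lemma F_zero : F 0 = 0 := rfl
lemma G_zero : G 0 = 0 := rfl
lemma F_one : F 1 = X 0 * (X 2 ^ 2 + X 1 * X 3 ^ 2) := rfl
lemma G_one : G 1 = X 2 * X 3 := rfl
lemma F_add_two (n : ℕ) : F (n + 2) = X 0 * (F (n + 1) ^ 2 + X 1 * G (n + 1) ^ 2) := rfl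
lemma G_add_two (n : ℕ) : G (n + 2) = F (n + 1) * G (n + 1) := rfl

def periodWeight : Fin 4 → ℤ × ℤ := ![(0, 0), (0, -2), (1, 0), (1, 1)]

lemma weight_periodWeight (m : Fin 4 →₀ ℕ) :
    Finsupp.weight periodWeight m = ((m 2 + m 3 : ℤ), (m 3 - 2 * m 1 : ℤ)) := by
  rw [Finsupp.weight_apply, Finsupp.sum_fintype _ _ (by simp), Fin.sum_univ_four]
  ext <;> simp [periodWeight, mul_comm, sub_eq_neg_add]

lemma isWeightedHomogeneous_X_periodWeight (i : Fin 4) :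
    IsWeightedHomogeneous periodWeight (X i : MvPolynomial (Fin 4) ℤ) (periodWeight i) :=
  isWeightedHomogeneous_X ℤ periodWeight i

lemma isWeightedHomogeneous_F_G (n : ℕ) :
    IsWeightedHomogeneous periodWeight (F n) ((2 : ℤ) ^ n, 0) ∧
      IsWeightedHomogeneous periodWeight (G n) ((2 : ℤ) ^ n, 1) := by
  have hX := isWeightedHomogeneous_X_periodWeight
  induction n with
  | zero =>
    rw [F_zero, G_zero]
    exact ⟨isWeightedHomogeneous_zero _ _ _, isWeightedHomogeneous_zero _ _ _⟩
  | succ n ih =>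
    cases n with
    | zero =>
      have hbY2 : IsWeightedHomogeneous periodWeight (X 1 * X 3 ^ 2 : MvPolynomial (Fin 4) ℤ)
          (2 • periodWeight 2) := by
        convert (hX 1).mul ((hX 3).pow 2) using 1; simp [periodWeight]
      constructor
      · rw [F_one]
        convert (hX 0).mul (((hX 2).pow 2).add hbY2) using 1; simp [periodWeight]
      · rw [G_one]
        convert (hX 2).mul (hX 3) using 1; simp [periodWeight]
    | succ n =>
      obtain ⟨hF, hG⟩ := ih
      have hbG2 : IsWeightedHomogeneous periodWeight (X 1 * G (n + 1) ^ 2)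
          (2 • ((2 : ℤ) ^ (n + 1), 0)) := by
        convert (hX 1).mul (hG.pow 2) using 1; simp [periodWeight]
      constructor
      · rw [F_add_two]
        convert (hX 0).mul ((hF.pow 2).add hbG2) using 1
        simp [periodWeight, pow_succ' _ (n + 1)]
      · rw [G_add_two]
        convert hF.mul hG using 1; simp [pow_succ, mul_two]

lemma isWeightedHomogeneous_Phi (n : ℕ) :
    IsWeightedHomogeneous periodWeight (X 3 * F n - X 2 * G n) ((2 : ℤ) ^ n + 1, 1) := by
  obtain ⟨hF, hG⟩ := isWeightedHomogeneous_F_G n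
  have hYF := (isWeightedHomogeneous_X_periodWeight 3).mul hF
  have hXG := (isWeightedHomogeneous_X_periodWeight 2).mul hG
  simp only [periodWeight, Matrix.cons_val, Prod.mk_add_mk, zero_add] at hYF hXG
  rw [add_comm] at hYF hXG
  exact hYF.sub hXG

theorem support_Phi_form_general (n : ℕ) :
    ∀ m ∈ (X 3 * F n - X 2 * G n).support,
      Even (m 2) ∧ m 3 = 2 ^ n + 1 - m 2 ∧ m 1 = 2 ^ (n - 1) - m 2 / 2 := by
  intro m hm
  obtain _ | n := n
  · simp [F_zero, G_zero] at hm
  have hweight := isWeightedHomogeneous_Phi (n + 1) (mem_support_iff.mp hm)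
  rw [weight_periodWeight, Prod.mk.injEq] at hweight
  obtain ⟨hXY, hYb⟩ := hweight
  replace hXY : m 2 + m 3 = 2 ^ n * 2 + 1 := by rw [← pow_succ]; exact_mod_cast hXY
  rw [Nat.add_sub_cancel, pow_succ]
  exact ⟨⟨2 ^ n - m 1, by omega⟩, by omega, by omega⟩

/-- Every monomial `k^α b^β X^γ Y^δ` in the support of the period polynomial
`Φ n = Y * F n - X * G n` has `γ` even, `δ = 2^n + 1 - γ` and `β = 2^(n-1) - γ/2`. -/
theorem support_Phi_form (n : ℕ) (hn : 1 ≤ n) :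
    ∀ m ∈ (X 3 * F n - X 2 * G n).support,
      Even (m 2) ∧ m 3 = 2 ^ n + 1 - m 2 ∧ m 1 = 2 ^ (n - 1) - m 2 / 2 :=
  support_Phi_form_general n
end

section
/- For every natural number n ≥ 1 there exists a polynomial Ψ in the ring ℤ[k, w, b] which is homogeneous of total degree 2^{n−1} in the two variables w and b (every monomial k^α·w^i·b^j in its support has i + j = 2^{n−1}), such that Ψ(k, z², b) = (F n)(k, b, z, 1) − z·(G n)(k, b, z, 1), i.e. Ψ(k, z², b) equals the polynomial in ℤ[k, b, z] obtained from Φ n = Y·(F n) − X·(G n) by setting X = z and Y = 1. -/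
open MvPolynomial

/-- Auxiliary pair (Pₙ, Hₙ) in ℤ[k,w,b] (0↦k, 1↦w, 2↦b). -/
noncomputable def PH : ℕ → MvPolynomial (Fin 3) ℤ × MvPolynomial (Fin 3) ℤ
  | 0 => (0, 0)
  | 1 => (X 0 * (X 1 + X 2), 1)
  | n + 2 =>
      (X 0 * ((PH (n + 1)).1 ^ 2 + X 2 * X 1 * (PH (n + 1)).2 ^ 2),
        (PH (n + 1)).1 * (PH (n + 1)).2)

noncomputable def wgt : Fin 3 → ℕ := fun i => if i = 0 then 0 else 1

lemma PH_hom (n : ℕ) :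
    (PH (n + 1)).1.IsWeightedHomogeneous wgt (2 ^ n) ∧
    (PH (n + 1)).2.IsWeightedHomogeneous wgt (2 ^ n - 1) := by
  induction n with
  | zero =>
      constructor
      · have h0 : (X 0 : MvPolynomial (Fin 3) ℤ).IsWeightedHomogeneous wgt 0 := by
          simpa [wgt] using isWeightedHomogeneous_X ℤ wgt (0 : Fin 3)
        have h1 : (X 1 : MvPolynomial (Fin 3) ℤ).IsWeightedHomogeneous wgt 1 := by
          simpa [wgt] using isWeightedHomogeneous_X ℤ wgt (1 : Fin 3)
        have h2 : (X 2 : MvPolynomial (Fin 3) ℤ).IsWeightedHomogeneous wgt 1 := by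
          simpa [wgt] using isWeightedHomogeneous_X ℤ wgt (2 : Fin 3)
        simpa [PH] using h0.mul (h1.add h2)
      · simpa [PH] using isWeightedHomogeneous_one ℤ wgt
  | succ n ih =>
      obtain ⟨hP, hH⟩ := ih
      have h0 : (X 0 : MvPolynomial (Fin 3) ℤ).IsWeightedHomogeneous wgt 0 := by
        simpa [wgt] using isWeightedHomogeneous_X ℤ wgt (0 : Fin 3)
      have h1 : (X 1 : MvPolynomial (Fin 3) ℤ).IsWeightedHomogeneous wgt 1 := by
        simpa [wgt] using isWeightedHomogeneous_X ℤ wgt (1 : Fin 3)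
      have h2 : (X 2 : MvPolynomial (Fin 3) ℤ).IsWeightedHomogeneous wgt 1 := by
        simpa [wgt] using isWeightedHomogeneous_X ℤ wgt (2 : Fin 3)
      have hpos : 1 ≤ 2 ^ n := Nat.one_le_two_pow
      constructor
      · have hPP : ((PH (n+1)).1 ^ 2).IsWeightedHomogeneous wgt (2 ^ n + 2 ^ n) := by
          rw [sq]; exact hP.mul hP
        have hHH : ((PH (n+1)).2 ^ 2).IsWeightedHomogeneous wgt ((2 ^ n - 1) + (2 ^ n - 1)) := by
          rw [sq]; exact hH.mul hH
        have h : (X 2 * X 1 * (PH (n+1)).2 ^ 2 : MvPolynomial (Fin 3) ℤ).IsWeightedHomogeneous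
            wgt (1 + 1 + ((2 ^ n - 1) + (2 ^ n - 1))) := (h2.mul h1).mul hHH
        have he : 1 + 1 + ((2 ^ n - 1) + (2 ^ n - 1)) = 2 ^ n + 2 ^ n := by omega
        rw [he] at h
        have := h0.mul (hPP.add h)
        rw [zero_add] at this
        have he2 : 2 ^ n + 2 ^ n = 2 ^ (n + 1) := by ring
        rw [he2] at this
        simpa [PH] using this
      · have := hP.mul hH
        have he : 2 ^ n + (2 ^ n - 1) = 2 ^ (n + 1) - 1 := by omega
        rw [he] at this
        simpa [PH] using this

noncomputable def φ : MvPolynomial (Fin 3) ℤ →ₐ[ℤ] MvPolynomial (Fin 3) ℤ :=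
  aeval (fun i : Fin 3 =>
    if i = 0 then (X 0 : MvPolynomial (Fin 3) ℤ)
    else if i = 1 then X 2 ^ 2
    else X 1)

noncomputable def ev : MvPolynomial (Fin 4) ℤ →ₐ[ℤ] MvPolynomial (Fin 3) ℤ :=
  aeval (fun i : Fin 4 =>
    if i = 0 then (X 0 : MvPolynomial (Fin 3) ℤ)
    else if i = 1 then X 1
    else if i = 2 then X 2
    else 1)

lemma φ_X0 : φ (X 0) = X 0 := by simp [φ]
lemma φ_X1 : φ (X 1) = X 2 ^ 2 := by simp [φ]
lemma φ_X2 : φ (X 2) = X 1 := by simp [φ]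
lemma ev_X0 : ev (X 0) = X 0 := by simp [ev]
lemma ev_X1 : ev (X 1) = X 1 := by simp [ev]
lemma ev_X2 : ev (X 2) = X 2 := by simp [ev]
lemma ev_X3 : ev (X 3) = 1 := by simp [ev]

lemma PH_subst (n : ℕ) :
    φ (PH (n + 1)).1 = ev (F (n + 1)) ∧
    X 2 * φ (PH (n + 1)).2 = ev (G (n + 1)) := by
  induction n with
  | zero =>
      have hF : F 1 = X 0 * (X 2 ^ 2 + X 1 * X 3 ^ 2) := rfl
      have hG : G 1 = X 2 * X 3 := rfl
      have hP : (PH 1).1 = X 0 * (X 1 + X 2) := rfl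
      have hH : (PH 1).2 = 1 := rfl
      constructor
      · rw [hP, hF]
        simp only [map_mul, map_add, map_pow, map_one, φ_X0, φ_X1, φ_X2,
          ev_X0, ev_X1, ev_X2, ev_X3]
        ring
      · rw [hH, hG]
        simp only [map_mul, map_one, ev_X2, ev_X3, mul_one]
  | succ n ih =>
      obtain ⟨hP, hH⟩ := ih
      have hF : F (n + 2) = X 0 * (F (n+1) ^ 2 + X 1 * G (n+1) ^ 2) := rfl
      have hG : G (n + 2) = F (n+1) * G (n+1) := rfl
      have hP2 : (PH (n + 2)).1 = X 0 * ((PH (n+1)).1 ^ 2 + X 2 * X 1 * (PH (n+1)).2 ^ 2) := rfl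
      have hH2 : (PH (n + 2)).2 = (PH (n+1)).1 * (PH (n+1)).2 := rfl
      constructor
      · rw [hP2, hF]
        simp only [map_mul, map_add, map_pow, φ_X0, φ_X1, φ_X2, ev_X0, ev_X1]
        rw [← hP, ← hH]
        ring
      · rw [hH2, hG]
        simp only [map_mul]
        rw [← hP, ← hH]
        ring

/-- There is a polynomial `Ψ ∈ ℤ[k, w, b]` (variables `0 ↦ k`, `1 ↦ w`, `2 ↦ b`),
homogeneous of total degree `2^(n-1)` in the variables `w` and `b`, such that
`Ψ(k, z², b)` equals the period polynomial `Φ n = Y * F n - X * G n` evaluated at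
`X = z`, `Y = 1`, as elements of `ℤ[k, b, z]` (variables `0 ↦ k`, `1 ↦ b`, `2 ↦ z`). -/
theorem exists_homogeneous_substitute (n : ℕ) (hn : 1 ≤ n) :
    ∃ Ψ : MvPolynomial (Fin 3) ℤ,
      (∀ m ∈ Ψ.support, m 1 + m 2 = 2 ^ (n - 1)) ∧
      aeval (fun i : Fin 3 =>
          if i = 0 then (X 0 : MvPolynomial (Fin 3) ℤ)
          else if i = 1 then X 2 ^ 2
          else X 1) Ψ =
        aeval (fun i : Fin 4 =>
          if i = 0 then (X 0 : MvPolynomial (Fin 3) ℤ)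
          else if i = 1 then X 1
          else if i = 2 then X 2
          else 1) (X 3 * F n - X 2 * G n) := by
  obtain ⟨m, rfl⟩ : ∃ m, n = m + 1 := ⟨n - 1, by omega⟩
  refine ⟨(PH (m + 1)).1 - X 1 * (PH (m + 1)).2, ?_, ?_⟩
  · obtain ⟨hP, hH⟩ := PH_hom m
    have h1 : (X 1 : MvPolynomial (Fin 3) ℤ).IsWeightedHomogeneous wgt 1 := by
      simpa [wgt] using isWeightedHomogeneous_X ℤ wgt (1 : Fin 3)
    have hXH := h1.mul hH
    have he : 1 + (2 ^ m - 1) = 2 ^ m := by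
      have : 1 ≤ 2 ^ m := Nat.one_le_two_pow
      omega
    rw [he] at hXH
    have hΨ : ((PH (m + 1)).1 - X 1 * (PH (m + 1)).2).IsWeightedHomogeneous wgt (2 ^ m) :=
      (weightedHomogeneousSubmodule ℤ wgt (2 ^ m)).sub_mem hP hXH
    intro d hd
    have hcoeff : coeff d ((PH (m + 1)).1 - X 1 * (PH (m + 1)).2) ≠ 0 :=
      mem_support_iff.mp hd
    have := hΨ hcoeff
    have hw : (Finsupp.weight wgt) d = d 1 + d 2 := by
      rw [Finsupp.weight_apply, Finsupp.sum_fintype _ _ (fun i => by simp)]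
      simp [Fin.sum_univ_three, wgt]
    simp only [Nat.add_sub_cancel]
    rw [← hw, this]
  · obtain ⟨hP, hH⟩ := PH_subst m
    show φ _ = ev _
    rw [map_sub, map_mul, hP, φ_X1, map_sub, map_mul, map_mul, ev_X3, ev_X2, one_mul, ← hH]
    ring
end

section
/- Let b be a nonzero rational number and let f_b : ℚ → ℚ be given by f_b(z) = z + b/z. Then f_b has no rational point of exact period n ≥ 5: for every nonzero z ∈ ℚ and every n ≥ 5, z is not a periodic point of f_b of minimal period n. Equivalently, for every nonzero z ∈ ℚ, Function.minimalPeriod f_b z ≤ 4. -/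
/-!
Along a periodic orbit `w₀, w₁, …` of `f(w) = w + b/w`, the `p`-adic valuations `vₖ` of the
`wₖ` obey the ultrametric rule `vₖ₊₁ ≥ min (vₖ, v(b) - vₖ)`, with equality when the two entries
differ. Once `2vₖ < v(b)` the valuation stays constant, so by periodicity `2vₖ ≤ v(b)` throughout;
then `vₖ` is nondecreasing, hence constant. Thus `f(z)/z` is a unit at every prime, i.e. `±1`.
Since `b ≠ 0` it is `-1`, and as `f` is odd, `f(f z) = f(-z) = z`.
-/

open Function

theorem Function.iterate_ne_of_mem_periodicPts {α : Type*} {f : α → α} {a x : α}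
    (ha : IsFixedPt f a) (hx : x ∈ periodicPts f) (hxa : x ≠ a) (k : ℕ) : f^[k] x ≠ a := by
  obtain ⟨n, hn, hper⟩ := hx
  intro hk
  apply hxa
  calc x = f^[k * n] x := (hper.const_mul k).symm
    _ = f^[k * n - k] (f^[k] x) := by
      rw [← iterate_add_apply, Nat.sub_add_cancel (Nat.le_mul_of_pos_right k hn)]
    _ = a := by rw [hk, iterate_fixed ha]

theorem Function.Periodic.succ_eq_of_min_le {v : ℕ → ℤ} {β : ℤ} {n : ℕ} (hv : Periodic v n)
    (hn : 0 < n) (hle : ∀ k, min (v k) (β - v k) ≤ v (k + 1))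
    (heq : ∀ k, v k ≠ β - v k → v (k + 1) = min (v k) (β - v k)) (k : ℕ) :
    v (k + 1) = v k := by
  have hstay : ∀ j, 2 * v j < β → 2 * v (j + 1) < β := fun j hj => by
    rw [heq j (by omega), min_eq_left (by omega)]
    exact hj
  have hbelow : ∀ j, 2 * v j ≤ β := by
    intro j
    by_contra! hj
    have hdrop : 2 * v (j + 1) < β := by
      rw [heq j (by omega), min_eq_right (by omega)]
      omega
    have hlater : ∀ m, 2 * v (j + 1 + m) < β := fun m => by
      induction m with
      | zero => exact hdrop
      | succ m ih => exact hstay _ ih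
    have := hlater (n - 1)
    rw [show j + 1 + (n - 1) = j + n by omega, hv j] at this
    omega
  have hmono : Monotone v := monotone_nat_of_le_succ fun j => by
    simpa [min_eq_left (show v j ≤ β - v j by linarith [hbelow j])] using hle j
  refine le_antisymm ?_ (hmono k.le_succ)
  calc v (k + 1) ≤ v (k + n) := hmono (by omega)
    _ = v k := hv k

theorem padicValRat_add_div_eq_of_mem_periodicPts (p : ℕ) [Fact p.Prime] {b z : ℚ} (hb : b ≠ 0)
    (hz : z ∈ periodicPts fun w : ℚ => w + b / w) (hz₀ : z ≠ 0) :
    padicValRat p (z + b / z) = padicValRat p z := by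
  set f : ℚ → ℚ := fun w => w + b / w
  have horbit : ∀ k, f^[k] z ≠ 0 :=
    iterate_ne_of_mem_periodicPts (show f 0 = 0 by simp [f]) hz hz₀
  obtain ⟨n, hn, hper⟩ := hz
  set v : ℕ → ℤ := fun k => padicValRat p (f^[k] z)
  have hv : Periodic v n := fun k => by simp only [v, iterate_add_apply, hper.eq]
  have hsucc : ∀ k, f^[k + 1] z = f^[k] z + b / f^[k] z := fun k => iterate_succ_apply' f k z
  have hval_div : ∀ k, padicValRat p (b / f^[k] z) = padicValRat p b - v k :=
    fun k => padicValRat.div hb (horbit k)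
  have hle : ∀ k, min (v k) (padicValRat p b - v k) ≤ v (k + 1) := fun k => by
    rw [← hval_div]
    simp only [v, hsucc]
    exact padicValRat.min_le_padicValRat_add (hsucc k ▸ horbit (k + 1))
  have heq : ∀ k, v k ≠ padicValRat p b - v k →
      v (k + 1) = min (v k) (padicValRat p b - v k) := fun k hk => by
    rw [← hval_div] at hk ⊢
    simp only [v, hsucc]
    exact padicValRat.add_eq_min (hsucc k ▸ horbit (k + 1)) (horbit k)
      (div_ne_zero hb (horbit k)) hk
  exact hv.succ_eq_of_min_le hn hle heq 0

theorem Rat.eq_one_or_eq_neg_one_of_padicValRat_eq_zero {q : ℚ} (hq : q ≠ 0)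
    (h : ∀ p : ℕ, p.Prime → padicValRat p q = 0) : q = 1 ∨ q = -1 := by
  have hden : q.den = 1 := by
    refine Nat.eq_one_iff_not_exists_prime_dvd.2 fun p hp hdvd => ?_
    have := Fact.mk hp
    have hnum : ¬ (p : ℤ) ∣ q.num := fun hnum =>
      hp.one_lt.ne' ((q.reduced.coprime_dvd_left (Int.natCast_dvd.1 hnum)).eq_one_of_dvd hdvd)
    have hval := h p hp
    rw [padicValRat_def, padicValInt.eq_zero_of_not_dvd hnum] at hval
    exact (dvd_iff_padicValNat_ne_zero q.den_nz).1 hdvd (by omega)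
  have hnum : q.num.natAbs = 1 := by
    refine Nat.eq_one_iff_not_exists_prime_dvd.2 fun p hp hdvd => ?_
    have := Fact.mk hp
    have hval := h p hp
    rw [padicValRat_def, hden, padicValNat_one_right, padicValInt] at hval
    exact (dvd_iff_padicValNat_ne_zero (Int.natAbs_ne_zero.2 (Rat.num_ne_zero.2 hq))).1 hdvd
      (by omega)
  rw [← Rat.coe_int_num_of_den_eq_one hden]
  rcases Int.natAbs_eq_iff.1 hnum with h1 | h1 <;> simp [h1]

/-- The map `z ↦ z + b/z` (with `b ∈ ℚ*`) has no rational point of exact period `n ≥ 5`: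
every nonzero rational point has minimal period at most `4`. -/
theorem no_large_period_add (b : ℚ) (hb : b ≠ 0) (z : ℚ) (hz : z ≠ 0) :
    Function.minimalPeriod (fun w : ℚ => w + b / w) z ≤ 4 := by
  set f : ℚ → ℚ := fun w => w + b / w
  by_cases hz_per : z ∈ periodicPts f
  swap
  · simp [minimalPeriod_eq_zero_of_notMem_periodicPts hz_per]
  have hfz : f z ≠ 0 := iterate_ne_of_mem_periodicPts (show f 0 = 0 by simp [f]) hz_per hz 1
  have hunit : ∀ p : ℕ, p.Prime → padicValRat p (f z / z) = 0 := fun p hp => by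
    have := Fact.mk hp
    rw [padicValRat.div hfz hz, padicValRat_add_div_eq_of_mem_periodicPts p hb hz_per hz, sub_self]
  have hneg : f z = -z := by
    rcases Rat.eq_one_or_eq_neg_one_of_padicValRat_eq_zero (div_ne_zero hfz hz) hunit with h | h
    · exact absurd (by simpa [f, hz] using (div_eq_one_iff_eq hz).1 h) hb
    · exact (div_eq_iff hz).1 h |>.trans (neg_one_mul z)
  have hperiod : IsPeriodicPt f 2 z := by
    change f (f z) = z
    rw [hneg]
    simp only [f] at hneg ⊢
    rw [div_neg]
    linarith
  exact (Nat.le_of_dvd two_pos hperiod.minimalPeriod_dvd).trans (by norm_num)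
end

section
/- Let b be a nonzero rational number and let f_b : ℚ → ℚ be given by f_b(z) = z + b/z. If a nonzero z ∈ ℚ is a periodic point of f_b (i.e. f_b^[n](z) = z for some n ≥ 1), then the minimal period of z equals 2. (In the paper's formulation on P¹: every rational periodic point of z ↦ z + b/z is either the fixed point at infinity or a point of exact period 2.) -/
/-- A nonzero rational whose `p`-adic norm is `1` for every prime `p` is `±1`. -/
lemma rat_eq_pm_one_of_padicNorm_eq_one (q : ℚ) (hq : q ≠ 0)
    (h : ∀ p : ℕ, p.Prime → padicNorm p q = 1) : q = 1 ∨ q = -1 := by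
  have hden : q.den = 1 := by
    by_contra hd
    set p := q.den.minFac with hp
    have hpp : p.Prime := Nat.minFac_prime hd
    haveI : Fact p.Prime := ⟨hpp⟩
    have hdvd : p ∣ q.den := Nat.minFac_dvd _
    have h1 : padicNorm p q = 1 := h p hpp
    have hqeq : (q : ℚ) = (q.num : ℚ) / (q.den : ℚ) := (Rat.num_div_den q).symm
    have hdenlt : padicNorm p (q.den : ℚ) < 1 := by
      have := (padicNorm.nat_lt_one_iff (p := p) q.den).2 hdvd
      simpa using this
    have hnumle : padicNorm p (q.num : ℚ) ≤ 1 := padicNorm.of_int q.num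
    have hdenpos : 0 < padicNorm p (q.den : ℚ) := by
      have hne : ((q.den : ℚ)) ≠ 0 := by
        exact_mod_cast q.den_nz
      exact lt_of_le_of_ne (padicNorm.nonneg _) (Ne.symm (padicNorm.nonzero hne))
    rw [hqeq, padicNorm.div] at h1
    have : padicNorm p (q.num : ℚ) = padicNorm p (q.den : ℚ) :=
      (div_eq_one_iff_eq (ne_of_gt hdenpos)).mp h1
    have hnumlt : padicNorm p (q.num : ℚ) < 1 := this ▸ hdenlt
    have hpnum : (p : ℤ) ∣ q.num := (padicNorm.int_lt_one_iff (p := p) q.num).1 (by simpa using hnumlt)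
    have hcop := q.reduced
    have hpnum' : p ∣ q.num.natAbs := by
      have := Int.natAbs_dvd_natAbs.mpr hpnum
      simpa using this
    have hdg : p ∣ Nat.gcd q.num.natAbs q.den := Nat.dvd_gcd hpnum' hdvd
    rw [hcop] at hdg
    exact hpp.one_lt.ne' (Nat.dvd_one.mp hdg)
  have hnum : q.num.natAbs = 1 := by
    by_contra hn
    set p := q.num.natAbs.minFac with hp
    have hpp : p.Prime := Nat.minFac_prime hn
    haveI : Fact p.Prime := ⟨hpp⟩
    have hdvd : (p : ℤ) ∣ q.num := Int.natAbs_dvd_natAbs.mp (by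
      simpa using Nat.minFac_dvd q.num.natAbs)
    have h1 : padicNorm p q = 1 := h p hpp
    have hqeq : (q : ℚ) = (q.num : ℚ) := by
      conv_lhs => rw [← Rat.num_div_den q]
      rw [hden]; simp
    rw [hqeq] at h1
    exact (padicNorm.int_eq_one_iff (p := p) q.num).1 h1 hdvd
  have hqeq : (q : ℚ) = (q.num : ℚ) := by
    conv_lhs => rw [← Rat.num_div_den q]
    rw [hden]; simp
  rcases Int.natAbs_eq_iff.mp hnum with h1 | h1 <;> rw [hqeq, h1] <;> simp

/-- Every nonzero rational periodic point of `z ↦ z + b/z` (with `b ∈ ℚ*`)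
has minimal period exactly `2`. -/
theorem periodic_points_add (b : ℚ) (hb : b ≠ 0) (z : ℚ) (hz : z ≠ 0)
    (n : ℕ) (hn : 1 ≤ n) (hper : (fun w : ℚ => w + b / w)^[n] z = z) :
    Function.minimalPeriod (fun w : ℚ => w + b / w) z = 2 := by
  set f : ℚ → ℚ := fun w : ℚ => w + b / w with hf
  set Z : ℕ → ℚ := fun i => f^[i] z with hZdef
  have hZ0 : Z 0 = z := rfl
  have hZsucc : ∀ i, Z (i + 1) = Z i + b / Z i := by
    intro i
    simp only [hZdef, Function.iterate_succ_apply', hf]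
  have hperiod : ∀ i, Z (i + n) = Z i := by
    intro i
    simp only [hZdef, Function.iterate_add_apply, hper]
  have hmul : ∀ j, Z (j * n) = z := by
    intro j
    induction j with
    | zero => simp [hZ0]
    | succ k ih => rw [Nat.succ_mul, hperiod, ih]
  -- all orbit points are nonzero
  have hne : ∀ i, Z i ≠ 0 := by
    intro k hk0
    have hafter : ∀ m, Z (k + m) = 0 := by
      intro m
      induction m with
      | zero => simpa using hk0
      | succ m ih => rw [← Nat.add_assoc, hZsucc, ih]; simp
    have hkn : k ≤ k * n := Nat.le_mul_of_pos_right k hn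
    have := hafter (k * n - k)
    rw [Nat.add_sub_cancel' hkn, hmul] at this
    exact hz this
  -- for every prime, the p-adic norm is constant along the orbit
  have hnorm : ∀ p : ℕ, p.Prime → padicNorm p (Z 1) = padicNorm p (Z 0) := by
    intro p hpp
    haveI : Fact p.Prime := ⟨hpp⟩
    set N : ℕ → ℚ := fun i => padicNorm p (Z i) with hN
    set B : ℚ := padicNorm p b with hB
    have hNpos : ∀ i, 0 < N i :=
      fun i => lt_of_le_of_ne (padicNorm.nonneg _) (Ne.symm (padicNorm.nonzero (hne i)))
    have hBpos : 0 < B := lt_of_le_of_ne (padicNorm.nonneg _) (Ne.symm (padicNorm.nonzero hb))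
    have hdiv : ∀ i, padicNorm p (b / Z i) = B / N i := fun i => padicNorm.div _ _
    -- if the norm is strictly above the "self-dual" level, it stays fixed
    have step_up : ∀ j, B < (N j) ^ 2 → N (j + 1) = N j := by
      intro j hj
      have hlt : B / N j < N j := by
        rw [div_lt_iff₀ (hNpos j)]; nlinarith [hNpos j]
      have hne' : padicNorm p (Z j) ≠ padicNorm p (b / Z j) := by
        rw [hdiv]; exact (ne_of_gt hlt).symm ∘ Eq.symm
      have hmax := padicNorm.add_eq_max_of_ne (p := p) hne'
      show padicNorm p (Z (j + 1)) = N j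
      rw [hZsucc j, hmax, hdiv, max_eq_left hlt.le]
    -- the norm can never be strictly below the self-dual level
    have claim1 : ∀ i, B ≤ (N i) ^ 2 := by
      intro i
      by_contra hlt
      push_neg at hlt
      have hgt : N i < B / N i := by
        rw [lt_div_iff₀ (hNpos i)]; nlinarith [hNpos i]
      have hne' : padicNorm p (Z i) ≠ padicNorm p (b / Z i) := by
        rw [hdiv]; exact ne_of_lt hgt
      have hstep : N (i + 1) = B / N i := by
        have := padicNorm.add_eq_max_of_ne (p := p) hne'
        show padicNorm p (Z (i + 1)) = B / N i
        rw [hZsucc, this, hdiv, max_eq_right hgt.le]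
      have hup : B < (N (i + 1)) ^ 2 := by
        rw [hstep, div_pow, lt_div_iff₀ (pow_pos (hNpos i) 2)]
        nlinarith [hNpos i, hBpos]
      have hconst : ∀ j, N (i + 1 + j) = N (i + 1) := by
        intro j
        induction j with
        | zero => rfl
        | succ m ih =>
          have : B < (N (i + 1 + m)) ^ 2 := ih ▸ hup
          rw [← Nat.add_assoc, step_up _ this, ih]
      have hback : N (i + n) = N i := by
        show padicNorm p (Z (i + n)) = padicNorm p (Z i)
        rw [hperiod]
      have : N i = N (i + 1) := by
        rw [← hback]
        have : i + n = i + 1 + (n - 1) := by omega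
        rw [this, hconst]
      rw [hstep] at this
      have : N i * N i = B := (eq_div_iff (ne_of_gt (hNpos i))).mp this
      nlinarith
    -- therefore the norm is non-increasing
    have claim2 : ∀ i, N (i + 1) ≤ N i := by
      intro i
      have hle : B / N i ≤ N i := by
        rw [div_le_iff₀ (hNpos i)]; nlinarith [claim1 i]
      calc N (i + 1) = padicNorm p (Z i + b / Z i) := by
            show padicNorm p (Z (i + 1)) = _
            rw [hZsucc i]
        _ ≤ max (padicNorm p (Z i)) (padicNorm p (b / Z i)) := padicNorm.nonarchimedean
        _ ≤ N i := by rw [hdiv]; exact max_le le_rfl hle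
    have mono : ∀ i j, N (i + j) ≤ N i := by
      intro i j
      induction j with
      | zero => exact le_rfl
      | succ m ih => exact le_trans (by rw [← Nat.add_assoc]; exact claim2 (i + m)) ih
    have h01 : N 1 ≤ N 0 := claim2 0
    have h10 : N 0 ≤ N 1 := by
      have : N (1 + (n - 1)) ≤ N 1 := mono 1 (n - 1)
      have heq : (1 : ℕ) + (n - 1) = n := by omega
      rw [heq] at this
      have hn0 : N n = N 0 := by
        show padicNorm p (Z n) = padicNorm p (Z 0)
        have : Z n = Z 0 := by simpa using hperiod 0
        rw [this]
      rw [hn0] at this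
      exact this
    exact le_antisymm h01 h10
  -- deduce f z = ± z
  have hZ1 : Z 1 = z + b / z := by rw [hZsucc 0, hZ0]
  set q : ℚ := (z + b / z) / z with hq
  have hZ1ne : z + b / z ≠ 0 := hZ1 ▸ hne 1
  have hq0 : q ≠ 0 := div_ne_zero hZ1ne hz
  have hqnorm : ∀ p : ℕ, p.Prime → padicNorm p q = 1 := by
    intro p hpp
    haveI : Fact p.Prime := ⟨hpp⟩
    have := hnorm p hpp
    rw [hZ1, hZ0] at this
    rw [hq, padicNorm.div, this, div_self (padicNorm.nonzero hz)]
  rcases rat_eq_pm_one_of_padicNorm_eq_one q hq0 hqnorm with h1 | h1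
  · -- q = 1 would mean b / z = 0, impossible
    exfalso
    rw [hq, div_eq_one_iff_eq hz] at h1
    have : b / z = 0 := by linarith
    rcases div_eq_zero_iff.mp this with h | h
    · exact hb h
    · exact hz h
  · -- q = -1, i.e. f z = -z, so the orbit is a genuine 2-cycle
    rw [hq, div_eq_iff hz] at h1
    have hfz : f z = -z := by rw [hf]; simpa using h1.trans (by ring)
    have hfz2 : f (f z) = z := by
      rw [hfz, hf]
      show -z + b / (-z) = z
      have : b / (-z) = -(b / z) := by ring
      rw [this]
      have hbz : z + b / z = -z := by simpa using h1.trans (by ring)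
      linarith
    have hp2 : Function.IsPeriodicPt f 2 z := by
      show f^[2] z = z
      simp [Function.iterate_succ_apply', hfz2]
    have hdvd : Function.minimalPeriod f z ∣ 2 := hp2.minimalPeriod_dvd
    have hpos : 0 < Function.minimalPeriod f z := hp2.minimalPeriod_pos (by norm_num)
    have hne1 : Function.minimalPeriod f z ≠ 1 := by
      intro h
      have hfix : Function.IsFixedPt f z :=
        Function.minimalPeriod_eq_one_iff_isFixedPt.mp h
      have : f z = z := hfix
      rw [hfz] at this
      have : z = 0 := by linarith
      exact hz this
    rcases Nat.prime_two.eq_one_or_self_of_dvd _ hdvd with h | h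
    · exact absurd h hne1
    · exact h
end

section
/- Let b be a nonzero rational number and let g_b : ℚ → ℚ be given by g_b(z) = −(z + b/z). Then g_b has no rational point of exact period n ≥ 5: for every nonzero z ∈ ℚ and every n ≥ 5, z is not a periodic point of g_b of minimal period n. Equivalently, for every nonzero z ∈ ℚ, Function.minimalPeriod g_b z ≤ 4. -/
/-!
Fix a prime `p` and write `v = padicValRat p`. If `2 v(w) < v(b)` then `v(g_b w) = v(w)`, so
this regime is invariant; if `2 v(w) > v(b)` then `v(g_b w) = v(b) - v(w)` lands in it, and the
orbit of `w` can never return to `w`. So `2 v(w) ≤ v(b)` on periodic orbits, and then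
`v(g_b w) ≥ v(w)` with equality forced by `2 v(g_b w) ≤ v(b)`. Hence `g_b z / z` has valuation
zero at every prime, i.e. `g_b z = ± z`, and `g_b z = -z` would mean `b / z = 0`: nonzero
periodic points are fixed.
-/

open Function

theorem Rat.eq_or_eq_neg_of_padicValRat_eq {q r : ℚ} (hq : q ≠ 0) (hr : r ≠ 0)
    (h : ∀ p : ℕ, p.Prime → padicValRat p q = padicValRat p r) : q = r ∨ q = -r := by
  have hqr : q / r = 1 ∨ q / r = -1 :=
    Rat.eq_one_or_eq_neg_one_of_padicValRat_eq_zero (div_ne_zero hq hr) fun p hp => by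
      have : Fact p.Prime := ⟨hp⟩
      rw [padicValRat.div hq hr, h p hp, sub_self]
  rcases hqr with h1 | h1
  · exact .inl ((div_eq_one_iff_eq hr).1 h1)
  · exact .inr ((div_eq_iff hr).1 h1 |>.trans (neg_one_mul r))

def negAddDiv (b w : ℚ) : ℚ := -(w + b / w)

lemma negAddDiv_zero (b : ℚ) : negAddDiv b 0 = 0 := by simp [negAddDiv]

section Valuation

variable {p : ℕ} [Fact p.Prime] {b w : ℚ}

lemma padicValRat_sq (w : ℚ) : padicValRat p (w ^ 2) = 2 * padicValRat p w := by
  rw [padicValRat.pow]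
  push_cast
  rfl

lemma negAddDiv_eq_neg_div (hw : w ≠ 0) : negAddDiv b w = -((w ^ 2 + b) / w) := by
  unfold negAddDiv
  field_simp

lemma sq_add_ne_zero_of_two_mul_padicValRat_ne (h : 2 * padicValRat p w ≠ padicValRat p b) :
    w ^ 2 + b ≠ 0 := by
  intro h0
  rw [eq_neg_of_add_eq_zero_right h0, padicValRat.neg, padicValRat_sq] at h
  exact h rfl

lemma negAddDiv_ne_zero (hw : w ≠ 0) (h : w ^ 2 + b ≠ 0) : negAddDiv b w ≠ 0 := by
  rw [negAddDiv_eq_neg_div hw]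
  exact neg_ne_zero.2 (div_ne_zero h hw)

lemma padicValRat_negAddDiv (hw : w ≠ 0) (h : w ^ 2 + b ≠ 0) :
    padicValRat p (negAddDiv b w) = padicValRat p (w ^ 2 + b) - padicValRat p w := by
  rw [negAddDiv_eq_neg_div hw, padicValRat.neg, padicValRat.div h hw]

lemma padicValRat_negAddDiv_of_two_mul_lt (hb : b ≠ 0) (hw : w ≠ 0)
    (h : 2 * padicValRat p w < padicValRat p b) :
    padicValRat p (negAddDiv b w) = padicValRat p w := by
  have hsum := sq_add_ne_zero_of_two_mul_padicValRat_ne h.ne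
  rw [padicValRat_negAddDiv hw hsum,
    padicValRat.add_eq_of_lt hsum (pow_ne_zero 2 hw) hb (by rwa [padicValRat_sq]), padicValRat_sq]
  ring

lemma padicValRat_negAddDiv_of_lt_two_mul (hb : b ≠ 0) (hw : w ≠ 0)
    (h : padicValRat p b < 2 * padicValRat p w) :
    padicValRat p (negAddDiv b w) = padicValRat p b - padicValRat p w := by
  have hsum := sq_add_ne_zero_of_two_mul_padicValRat_ne h.ne'
  rw [padicValRat_negAddDiv hw hsum, add_comm,
    padicValRat.add_eq_of_lt (add_comm (w ^ 2) b ▸ hsum) hb (pow_ne_zero 2 hw)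
      (by rwa [padicValRat_sq])]

lemma le_padicValRat_negAddDiv (hw : w ≠ 0) (hgw : negAddDiv b w ≠ 0)
    (h : 2 * padicValRat p w ≤ padicValRat p b) :
    padicValRat p w ≤ padicValRat p (negAddDiv b w) := by
  have hsum : w ^ 2 + b ≠ 0 := fun h0 =>
    hgw (by rw [negAddDiv_eq_neg_div hw, h0, zero_div, neg_zero])
  have hmin := padicValRat.min_le_padicValRat_add (p := p) hsum
  rw [padicValRat_sq] at hmin
  rw [padicValRat_negAddDiv hw hsum]
  omega

lemma mapsTo_negAddDiv (hb : b ≠ 0) :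
    Set.MapsTo (negAddDiv b) {w | w ≠ 0 ∧ 2 * padicValRat p w < padicValRat p b}
      {w | w ≠ 0 ∧ 2 * padicValRat p w < padicValRat p b} := fun w ⟨hw, h⟩ =>
  ⟨negAddDiv_ne_zero hw (sq_add_ne_zero_of_two_mul_padicValRat_ne h.ne),
    by rwa [padicValRat_negAddDiv_of_two_mul_lt hb hw h]⟩

end Valuation

section Periodic

variable {b z : ℚ} {n : ℕ}

lemma negAddDiv_ne_zero_of_isPeriodicPt (hz : z ≠ 0) (hn : 0 < n)
    (hper : IsPeriodicPt (negAddDiv b) n z) : negAddDiv b z ≠ 0 := fun h0 =>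
  hz <| hper.eq_of_apply_eq_same (IsFixedPt.isPeriodicPt (negAddDiv_zero b) n) hn
    (h0.trans (negAddDiv_zero b).symm)

variable {p : ℕ} [Fact p.Prime]

lemma two_mul_padicValRat_le_of_isPeriodicPt (hb : b ≠ 0) (hz : z ≠ 0) (hn : 0 < n)
    (hper : IsPeriodicPt (negAddDiv b) n z) : 2 * padicValRat p z ≤ padicValRat p b := by
  by_contra! hlt
  obtain ⟨m, rfl⟩ := Nat.exists_eq_succ_of_ne_zero hn.ne'
  have hgz : negAddDiv b z ∈ {w | w ≠ 0 ∧ 2 * padicValRat p w < padicValRat p b} :=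
    ⟨negAddDiv_ne_zero hz (sq_add_ne_zero_of_two_mul_padicValRat_ne hlt.ne'),
      by rw [padicValRat_negAddDiv_of_lt_two_mul hb hz hlt]; linarith⟩
  have hback := (mapsTo_negAddDiv hb).iterate m hgz
  rw [← iterate_succ_apply, hper.eq] at hback
  exact hback.2.not_gt hlt

lemma padicValRat_negAddDiv_of_isPeriodicPt (hb : b ≠ 0) (hz : z ≠ 0) (hn : 0 < n)
    (hper : IsPeriodicPt (negAddDiv b) n z) :
    padicValRat p (negAddDiv b z) = padicValRat p z := by
  have hgz := negAddDiv_ne_zero_of_isPeriodicPt hz hn hper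
  have hgz_le := two_mul_padicValRat_le_of_isPeriodicPt (p := p) hb hgz hn hper.apply
  rcases (two_mul_padicValRat_le_of_isPeriodicPt (p := p) hb hz hn hper).lt_or_eq with hlt | heq
  · exact padicValRat_negAddDiv_of_two_mul_lt hb hz hlt
  · have := le_padicValRat_negAddDiv (p := p) hz hgz heq.le
    omega

end Periodic

lemma isFixedPt_negAddDiv_of_isPeriodicPt {b z : ℚ} {n : ℕ} (hb : b ≠ 0) (hz : z ≠ 0)
    (hn : 0 < n) (hper : IsPeriodicPt (negAddDiv b) n z) : IsFixedPt (negAddDiv b) z := by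
  have hgz := negAddDiv_ne_zero_of_isPeriodicPt hz hn hper
  refine (Rat.eq_or_eq_neg_of_padicValRat_eq hgz hz fun p hp => ?_).resolve_right fun h => ?_
  · have : Fact p.Prime := ⟨hp⟩
    exact padicValRat_negAddDiv_of_isPeriodicPt hb hz hn hper
  · have hbz : b / z = 0 := by
      unfold negAddDiv at h
      linarith
    exact div_ne_zero hb hz hbz

/-- The map `z ↦ -(z + b/z)` (with `b ∈ ℚ*`) has no rational point of exact period `n ≥ 5`:
every nonzero rational point has minimal period at most `4`. -/
theorem no_large_period_neg (b : ℚ) (hb : b ≠ 0) (z : ℚ) (hz : z ≠ 0) :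
    Function.minimalPeriod (fun w : ℚ => -(w + b / w)) z ≤ 4 := by
  change minimalPeriod (negAddDiv b) z ≤ 4
  by_cases hz_per : z ∈ periodicPts (negAddDiv b)
  · obtain ⟨n, hn, hper⟩ := hz_per
    rw [minimalPeriod_eq_one_iff_isFixedPt.2 (isFixedPt_negAddDiv_of_isPeriodicPt hb hz hn hper)]
    norm_num
  · rw [minimalPeriod_eq_zero_of_notMem_periodicPts hz_per]
    norm_num
end
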